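/- arXiv:2011.13722 — 7 statements merged into one kernel-verified Lean document; each statement's English description precedes it below -/
import Mathlib

section
/- Let c₁, …, c_m be nonzero integers. If there exists a nonempty subset I ⊆ {1, …, m} with ∑_{i∈I} c_i = 0, then for every finite partition of the positive integers, some cell contains nonzero elements a₁, …, a_m (not necessarily distinct) with c₁a₁ + ⋯ + c_m a_m = 0. (Sufficiency direction of Rado's theorem for a single equation.) -/
open Combinatorics in
/-- Finitary van der Waerden with explicit bounds, derived from Hales–Jewett. -/
lemma vdw_fin (L r : ℕ) : ∃ N : ℕ, 1 ≤ N ∧ ∀ f : ℕ → Fin r, ∃ a b : ℕ,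
    1 ≤ a ∧ 1 ≤ b ∧ a ≤ N ∧ b + a * L ≤ N ∧ ∀ i ≤ L, f (b + a * i) = f b := by
  obtain ⟨ι, _inst, hι⟩ := Line.exists_mono_in_high_dimension (Fin (L+1)) (Fin r)
  classical
  refine ⟨1 + (L+1) * Fintype.card ι, Nat.le_add_right 1 _, fun f => ?_⟩
  obtain ⟨l, c, hl⟩ := hι fun v => f (1 + ∑ i, (v i : ℕ))
  set s : Finset ι := Finset.univ.filter (fun i => l.idxFun i = none) with hs
  set b : ℕ := 1 + ∑ i ∈ sᶜ, ((l.idxFun i).map Fin.val).getD 0 with hb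
  have key : ∀ x : Fin (L+1), f (b + s.card * (x : ℕ)) = c := by
    intro x
    rw [← hl x]
    congr 1
    have : ∑ i, ((l x i : Fin (L+1)) : ℕ) =
        ∑ i ∈ s, ((l x i : Fin (L+1)) : ℕ) + ∑ i ∈ sᶜ, ((l x i : Fin (L+1)) : ℕ) :=
      (Finset.sum_add_sum_compl s _).symm
    rw [this]
    have h1 : ∑ i ∈ s, ((l x i : Fin (L+1)) : ℕ) = s.card * (x : ℕ) := by
      rw [Finset.sum_congr rfl (fun i hi => ?_), Finset.sum_const, smul_eq_mul]
      rw [hs, Finset.mem_filter] at hi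
      rw [l.apply_none _ _ hi.right]
    have h2 : ∑ i ∈ sᶜ, ((l x i : Fin (L+1)) : ℕ) =
        ∑ i ∈ sᶜ, ((l.idxFun i).map Fin.val).getD 0 := by
      refine Finset.sum_congr rfl (fun i hi => ?_)
      rw [hs, Finset.compl_filter, Finset.mem_filter] at hi
      obtain ⟨y, hy⟩ := Option.ne_none_iff_exists.mp hi.right
      simp [Line.coe_apply, ← hy]
    rw [h1, h2, hb]
    ring
  have hcard : 1 ≤ s.card := by
    obtain ⟨i, hi⟩ := l.proper
    exact Finset.card_pos.mpr ⟨i, by rw [hs, Finset.mem_filter]; exact ⟨Finset.mem_univ _, hi⟩⟩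
  have hsum_le : ∑ i ∈ sᶜ, ((l.idxFun i).map Fin.val).getD 0 ≤ L * sᶜ.card := by
    calc ∑ i ∈ sᶜ, ((l.idxFun i).map Fin.val).getD 0 ≤ ∑ _i ∈ sᶜ, L := by
          refine Finset.sum_le_sum (fun i _ => ?_)
          cases h : l.idxFun i with
          | none => simp
          | some y => simpa [h] using Nat.lt_succ_iff.mp y.isLt
      _ = sᶜ.card * L := by rw [Finset.sum_const, smul_eq_mul]
      _ = L * sᶜ.card := Nat.mul_comm _ _
  refine ⟨s.card, b, hcard, Nat.le_add_right 1 _, ?_, ?_, fun i hi => ?_⟩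
  · calc s.card ≤ Fintype.card ι := Finset.card_le_univ s
      _ ≤ (L+1) * Fintype.card ι := Nat.le_mul_of_pos_left _ (Nat.succ_pos L)
      _ ≤ 1 + (L+1) * Fintype.card ι := Nat.le_add_left _ 1
  · have h0 : b + s.card * L ≤ 1 + L * sᶜ.card + s.card * L := by
      rw [hb]; omega
    have hcompl : sᶜ.card + s.card = Fintype.card ι := by
      rw [Finset.card_compl]
      have h5 := Finset.card_le_univ s
      omega
    have h4 : L * sᶜ.card + s.card * L = L * Fintype.card ι := by
      calc L * sᶜ.card + s.card * L = L * (sᶜ.card + s.card) := by ring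
        _ = L * Fintype.card ι := by rw [hcompl]
    have h3 : L * Fintype.card ι ≤ (L+1) * Fintype.card ι :=
      Nat.mul_le_mul_right _ (Nat.le_succ L)
    omega
  · have h0 := key 0
    have hi' := key ⟨i, Nat.lt_succ_of_le hi⟩
    simp only [Fin.val_zero, Nat.mul_zero, Nat.add_zero] at h0
    rw [h0, hi']

/-- Brauer-type lemma: monochromatic `x`, `x + t*d`, `q*d`, by induction on the
number of colors used. -/
lemma brauer (q : ℕ) (hq : 1 ≤ q) (t : ℤ) (r : ℕ) : ∀ s : ℕ, ∃ n : ℕ, 1 ≤ n ∧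
    ∀ f : ℕ → Fin r, ((Finset.Icc 1 n).image f).card ≤ s →
    ∃ x d y : ℕ, 1 ≤ x ∧ 1 ≤ d ∧ 1 ≤ y ∧ (y : ℤ) = (x : ℤ) + t * d ∧ q * d ≤ n ∧
      f x = f (q * d) ∧ f x = f y := by
  intro s
  induction s with
  | zero =>
    refine ⟨1, le_refl 1, fun f hf => absurd hf ?_⟩
    simp only [not_le]
    exact Finset.card_pos.mpr ⟨f 1, Finset.mem_image_of_mem f (by simp)⟩
  | succ s ih =>
    obtain ⟨n, hn, ihn⟩ := ih
    set L := 2 * n * t.natAbs with hL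
    obtain ⟨N, hN, hvdw⟩ := vdw_fin L r
    refine ⟨q * N * n, Nat.one_le_iff_ne_zero.mpr (by positivity), fun f hf => ?_⟩
    obtain ⟨a, b, ha, hb, haN, hbL, hab⟩ := hvdw f
    by_cases hcase : ∃ j, 1 ≤ j ∧ j ≤ n ∧ f (q * (a * j)) = f b
    · obtain ⟨j, hj1, hjn, hjc⟩ := hcase
      set lam : ℕ := n * t.natAbs with hlam
      have habs : (t * (j:ℤ)).natAbs ≤ lam := by
        rw [Int.natAbs_mul, hlam, Nat.mul_comm n t.natAbs]
        exact Nat.mul_le_mul_left _ (by simpa using hjn)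
      have habs' : ((t * (j:ℤ)).natAbs : ℤ) ≤ (lam : ℤ) := by exact_mod_cast habs
      have hmu0 : (0 : ℤ) ≤ (lam : ℤ) + t * j := by
        have h1 := neg_abs_le (t * (j:ℤ))
        rw [Int.abs_eq_natAbs] at h1
        omega
      have hmuL : (lam : ℤ) + t * j ≤ L := by
        have h1 := le_abs_self (t * (j:ℤ))
        rw [Int.abs_eq_natAbs] at h1
        have hL2 : (L : ℤ) = 2 * lam := by rw [hL, hlam]; push_cast; ring
        omega
      set mu : ℕ := ((lam : ℤ) + t * j).toNat with hmu
      have hmucast : (mu : ℤ) = (lam : ℤ) + t * j := Int.toNat_of_nonneg hmu0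
      have hmuLn : mu ≤ L := Int.toNat_le.mpr hmuL
      have hlamL : lam ≤ L := by
        rw [hL, hlam]
        exact Nat.mul_le_mul (by omega) (le_refl t.natAbs)
      refine ⟨b + a * lam, a * j, b + a * mu, by omega, Nat.mul_pos ha hj1, by omega,
        ?_, ?_, ?_, ?_⟩
      · push_cast [hmucast]; ring
      · calc q * (a * j) ≤ q * (N * n) := by
              exact Nat.mul_le_mul_left _ (Nat.mul_le_mul haN hjn)
          _ = q * N * n := by ring
      · rw [hab lam hlamL, ← hjc]
      · rw [hab lam hlamL, hab mu hmuLn]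
    · push_neg at hcase
      set g : ℕ → Fin r := fun j => f (q * (a * j)) with hg
      have hsub : (Finset.Icc 1 n).image g ⊆ ((Finset.Icc 1 (q * N * n)).image f).erase (f b) := by
        intro k hk
        obtain ⟨j, hj, rfl⟩ := Finset.mem_image.mp hk
        rw [Finset.mem_Icc] at hj
        refine Finset.mem_erase.mpr ⟨hcase j hj.1 hj.2, Finset.mem_image_of_mem f ?_⟩
        rw [Finset.mem_Icc]
        constructor
        · exact Nat.mul_pos hq (Nat.mul_pos ha hj.1)
        · calc q * (a * j) ≤ q * (N * n) := Nat.mul_le_mul_left _ (Nat.mul_le_mul haN hj.2)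
            _ = q * N * n := by ring
      have hbmem : f b ∈ (Finset.Icc 1 (q * N * n)).image f := by
        refine Finset.mem_image_of_mem f ?_
        rw [Finset.mem_Icc]
        refine ⟨hb, ?_⟩
        calc b ≤ N := le_trans (Nat.le_add_right b (a * L)) hbL
          _ = 1 * N * 1 := by ring
          _ ≤ q * N * n := by
              exact Nat.mul_le_mul (Nat.mul_le_mul hq (le_refl N)) hn
      have hcards : ((Finset.Icc 1 n).image g).card ≤ s := by
        calc ((Finset.Icc 1 n).image g).card
            ≤ (((Finset.Icc 1 (q * N * n)).image f).erase (f b)).card :=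
              Finset.card_le_card hsub
          _ = ((Finset.Icc 1 (q * N * n)).image f).card - 1 :=
              Finset.card_erase_of_mem hbmem
          _ ≤ s := by omega
      obtain ⟨xg, dg, yg, hx1, hd1, hy1, hyz, hqd, hfx, hfy⟩ := ihn g hcards
      refine ⟨q * (a * xg), a * (q * dg), q * (a * yg),
        Nat.mul_pos hq (Nat.mul_pos ha hx1), Nat.mul_pos ha (Nat.mul_pos hq hd1),
        Nat.mul_pos hq (Nat.mul_pos ha hy1), ?_, ?_, ?_, ?_⟩
      · push_cast
        linear_combination (q : ℤ) * (a : ℤ) * hyz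
      · calc q * (a * (q * dg)) = (q * a) * (q * dg) := by ring
          _ ≤ (q * N) * n := Nat.mul_le_mul (Nat.mul_le_mul_left q haN) hqd
          _ = q * N * n := rfl
      · have := hfx
        rw [hg] at this
        calc f (q * (a * xg)) = f (q * (a * (q * dg))) := by
              simpa [Nat.mul_assoc, Nat.mul_comm, Nat.mul_left_comm] using this
          _ = f (q * (a * (q * dg))) := rfl
      · have := hfy
        rw [hg] at this
        exact this

/-- Sufficiency direction of Rado's theorem for a single equation. -/
theorem rado_sufficient (m : ℕ) (c : Fin m → ℤ) (hc : ∀ i, c i ≠ 0)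
    (hI : ∃ I : Finset (Fin m), I.Nonempty ∧ ∑ i ∈ I, c i = 0) :
    ∀ (r : ℕ) (f : ℕ → Fin r),
      ∃ (j : Fin r) (a : Fin m → ℕ), (∀ i, a i ≠ 0) ∧ (∀ i, f (a i) = j) ∧
        ∑ i, c i * (a i : ℤ) = 0 := by
  intro r f
  obtain ⟨I, hIne, hIsum⟩ := hI
  obtain ⟨i0, hi0⟩ := hIne
  set q : ℕ := (c i0).natAbs with hqdef
  have hq : 1 ≤ q := Int.natAbs_pos.mpr (hc i0)
  set S : ℤ := ∑ i ∈ Iᶜ, c i with hS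
  set t : ℤ := -S * Int.sign (c i0) with ht
  have hct : c i0 * t = -S * q := by
    rw [ht]
    have h1 : c i0 * Int.sign (c i0) = (q : ℤ) := by
      have habs : ((q : ℕ) : ℤ) = |c i0| := by rw [hqdef, Int.natCast_natAbs]
      rcases lt_trichotomy (c i0) 0 with h | h | h
      · rw [Int.sign_eq_neg_one_of_neg h, habs, abs_of_neg h]; ring
      · exact absurd h (hc i0)
      · rw [Int.sign_eq_one_of_pos h, habs, abs_of_pos h]; ring
    calc c i0 * (-S * Int.sign (c i0)) = -S * (c i0 * Int.sign (c i0)) := by ring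
      _ = -S * q := by rw [h1]
  obtain ⟨n, hn, hbr⟩ := brauer q hq t r r
  have hcards : ((Finset.Icc 1 n).image f).card ≤ r := by
    calc ((Finset.Icc 1 n).image f).card ≤ Fintype.card (Fin r) := Finset.card_le_univ _
      _ = r := Fintype.card_fin r
  obtain ⟨x, d, y, hx1, hd1, hy1, hyz, hqd, hfqd, hfy⟩ := hbr f hcards
  set a : Fin m → ℕ := fun i => if i = i0 then y else if i ∈ I then x else q * d with hadef
  refine ⟨f x, a, fun i => ?_, fun i => ?_, ?_⟩
  · rw [hadef]
    dsimp only
    split_ifs with h1 h2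
    · omega
    · omega
    · exact Nat.pos_iff_ne_zero.mp (Nat.mul_pos hq hd1)
  · rw [hadef]
    dsimp only
    split_ifs with h1 h2
    · exact hfy.symm
    · rfl
    · exact hfqd.symm
  · have hsplit : ∑ i, c i * (a i : ℤ) =
        ∑ i ∈ I, c i * (a i : ℤ) + ∑ i ∈ Iᶜ, c i * (a i : ℤ) :=
      (Finset.sum_add_sum_compl I _).symm
    have hIpart : ∑ i ∈ I, c i * (a i : ℤ) = c i0 * ((y : ℤ) - (x : ℤ)) := by
      have step : ∀ i ∈ I, c i * (a i : ℤ) =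
          (if i = i0 then c i0 * ((y : ℤ) - (x : ℤ)) else 0) + c i * (x : ℤ) := by
        intro i hi
        by_cases h : i = i0
        · subst h
          rw [hadef]
          simp only [if_pos rfl, if_true]
          ring
        · rw [hadef]
          simp only [h, if_false, if_neg h, if_pos hi]
          ring
      rw [Finset.sum_congr rfl step, Finset.sum_add_distrib, Finset.sum_ite_eq' I i0,
        if_pos hi0, ← Finset.sum_mul, hIsum]
      ring
    have hCpart : ∑ i ∈ Iᶜ, c i * (a i : ℤ) = S * ((q : ℤ) * d) := by
      rw [hS, Finset.sum_mul]
      refine Finset.sum_congr rfl (fun i hi => ?_)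
      rw [Finset.mem_compl] at hi
      have hne : i ≠ i0 := fun h => hi (h ▸ hi0)
      rw [hadef]
      simp only [if_neg hne, if_neg hi]
      push_cast
      ring
    rw [hsplit, hIpart, hCpart]
    have : (y : ℤ) - x = t * d := by omega
    rw [this]
    linear_combination (d : ℤ) * hct
end

section
/- Let c₁, …, c_m be nonzero integers, let P(x₁,…,x_m) = ∑ c_i x_i, and let U, V be ultrafilters on ℤ such that U witnesses the partition regularity of P = 0 (every A ∈ U contains a solution of P = 0). Then for every ultrafilter V on ℤ, both U·V and V·U witness the partition regularity of P = 0, where · denotes the extension of integer multiplication to βℤ. -/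
/-- Extension of multiplication on ℤ to ultrafilters. -/
def umul (U V : Ultrafilter ℤ) : Ultrafilter ℤ :=
  U.bind fun x => V.map fun y => x * y

lemma mem_umul {U V : Ultrafilter ℤ} {A : Set ℤ} :
    A ∈ umul U V ↔ {x : ℤ | {y : ℤ | x * y ∈ A} ∈ V} ∈ U := by
  rfl

/-- If an ultrafilter `U` witnesses the partition regularity of a linear
homogeneous equation, so do `U · V` and `V · U` for every ultrafilter `V`. -/
theorem umul_witness (m : ℕ) (c : Fin m → ℤ) (hc : ∀ i, c i ≠ 0)
    (U : Ultrafilter ℤ)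
    (hU : ∀ A : Set ℤ, A ∈ U → ∃ a : Fin m → ℤ, (∀ i, a i ∈ A) ∧
      ∑ i, c i * a i = 0) :
    ∀ V : Ultrafilter ℤ,
      (∀ A : Set ℤ, A ∈ umul U V → ∃ a : Fin m → ℤ, (∀ i, a i ∈ A) ∧
        ∑ i, c i * a i = 0) ∧
      (∀ A : Set ℤ, A ∈ umul V U → ∃ a : Fin m → ℤ, (∀ i, a i ∈ A) ∧
        ∑ i, c i * a i = 0) := by
  intro V
  constructor
  · intro A hA
    rw [mem_umul] at hA
    obtain ⟨a, ha, hsum⟩ := hU _ hA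
    have hInt : (⋂ i, {y : ℤ | a i * y ∈ A}) ∈ V := by
      apply Filter.iInter_mem.2
      intro i
      exact ha i
    obtain ⟨y, hy⟩ := Ultrafilter.nonempty_of_mem hInt
    refine ⟨fun i => a i * y, fun i => ?_, ?_⟩
    · exact Set.mem_iInter.1 hy i
    · have : ∑ i, c i * (a i * y) = (∑ i, c i * a i) * y := by
        rw [Finset.sum_mul]; exact Finset.sum_congr rfl fun i _ => by ring
      rw [this, hsum, zero_mul]
  · intro A hA
    rw [mem_umul] at hA
    obtain ⟨x, hx⟩ := Ultrafilter.nonempty_of_mem hA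
    obtain ⟨a, ha, hsum⟩ := hU _ hx
    refine ⟨fun i => x * a i, fun i => ha i, ?_⟩
    have : ∑ i, c i * (x * a i) = x * ∑ i, c i * a i := by
      rw [Finset.mul_sum]; exact Finset.sum_congr rfl fun i _ => by ring
    rw [this, hsum, mul_zero]
end

section
/- Every strongly summable ultrafilter on the group (ℤ, +) is additively idempotent. -/
/-- Extension of addition on ℤ to ultrafilters. -/
def uadd (U V : Ultrafilter ℤ) : Ultrafilter ℤ :=
  U.bind fun x => V.map fun y => x + y

/-- The set of finite sums of a sequence of integers. -/
def FS (x : ℕ → ℤ) : Set ℤ :=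
  {s | ∃ F : Finset ℕ, F.Nonempty ∧ ∑ t ∈ F, x t = s}

/-- `U` is strongly summable if every member contains an FS-set
of an injective sequence which itself belongs to `U`. -/
def StronglySummable (U : Ultrafilter ℤ) : Prop :=
  ∀ A : Set ℤ, A ∈ U → ∃ x : ℕ → ℤ, Function.Injective x ∧
    FS x ⊆ A ∧ FS x ∈ U

set_option linter.unusedSectionVars false

lemma mem_uadd_iff {U V : Ultrafilter ℤ} {A : Set ℤ} :
    A ∈ uadd U V ↔ {a : ℤ | {b : ℤ | a + b ∈ A} ∈ V} ∈ U := Iff.rfl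


/-- The dyadic cell: positive integers with scale `≡ r mod 6` and window `w`. -/
def cls (r w : ℕ) : Set ℤ :=
  {b : ℤ | 0 < b ∧ Nat.log 2 b.toNat % 6 = r ∧
    b.toNat / 2 ^ (Nat.log 2 b.toNat - 2) = w}

lemma pn_bounds {r w v : ℕ} (hw4 : 4 ≤ w)
    (hr : Nat.log 2 v % 6 = r) (hw : v / 2 ^ (Nat.log 2 v - 2) = w) :
    2 ≤ Nat.log 2 v ∧ w * 2 ^ (Nat.log 2 v - 2) ≤ v ∧
      v < (w + 1) * 2 ^ (Nat.log 2 v - 2) := by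
  set L := Nat.log 2 v with hL
  have hvlt : v < 2 ^ (L + 1) := Nat.lt_pow_succ_log_self (by norm_num) v
  have hL2 : 2 ≤ L := by
    by_contra h
    push_neg at h
    have h1 : v < 4 := by
      have : (2:ℕ) ^ (L + 1) ≤ 2 ^ 2 := Nat.pow_le_pow_right (by norm_num) (by omega)
      omega
    have h0 : L - 2 = 0 := by omega
    rw [h0, pow_zero, Nat.div_one] at hw
    omega
  have hk : 0 < 2 ^ (L - 2) := Nat.pow_pos (by norm_num)
  refine ⟨hL2, ?_, ?_⟩
  · have := Nat.div_mul_le_self v (2 ^ (L - 2))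
    rw [hw] at this
    exact this
  · exact (Nat.div_lt_iff_lt_mul hk).mp (by rw [hw]; exact Nat.lt_succ_self w)

lemma pow_split {L : ℕ} (h : 2 ≤ L) :
    (2:ℕ) ^ L = 4 * 2 ^ (L - 2) ∧ (2:ℕ) ^ (L + 1) = 8 * 2 ^ (L - 2) ∧
      (2:ℕ) ^ (L + 2) = 16 * 2 ^ (L - 2) := by
  refine ⟨?_, ?_, ?_⟩
  · rw [show (4:ℕ) * 2 ^ (L-2) = 2 ^ (L-2) * 2 ^ 2 by ring, ← pow_add]
    congr 1; omega
  · rw [show (8:ℕ) * 2 ^ (L-2) = 2 ^ (L-2) * 2 ^ 3 by ring, ← pow_add]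
    congr 1; omega
  · rw [show (16:ℕ) * 2 ^ (L-2) = 2 ^ (L-2) * 2 ^ 4 by ring, ← pow_add]
    congr 1; omega

section Trap

variable {r w : ℕ} (hw4 : 4 ≤ w) (hw8 : w < 8) (n : ℕ → ℕ)
variable (H : ∀ S : Finset ℕ, S.Nonempty →
    Nat.log 2 (∑ j ∈ S, n j) % 6 = r ∧
    (∑ j ∈ S, n j) / 2 ^ (Nat.log 2 (∑ j ∈ S, n j) - 2) = w)

include hw4 hw8 H

lemma single_spec (i : ℕ) :
    Nat.log 2 (n i) % 6 = r ∧ 2 ≤ Nat.log 2 (n i) ∧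
      w * 2 ^ (Nat.log 2 (n i) - 2) ≤ n i ∧
      n i < (w + 1) * 2 ^ (Nat.log 2 (n i) - 2) := by
  have h := H {i} ⟨i, Finset.mem_singleton_self i⟩
  rw [Finset.sum_singleton] at h
  obtain ⟨h1, h2⟩ := h
  obtain ⟨a, b, c⟩ := pn_bounds hw4 h1 h2
  exact ⟨h1, a, b, c⟩

lemma scale_ne {i j : ℕ} (hij : i ≠ j) : Nat.log 2 (n i) ≠ Nat.log 2 (n j) := by
  intro heq
  obtain ⟨hi1, hi2, hi3, hi4⟩ := single_spec hw4 hw8 n H i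
  obtain ⟨hj1, hj2, hj3, hj4⟩ := single_spec hw4 hw8 n H j
  rw [← heq] at hj3 hj4
  have hpair := H {i, j} ⟨i, by simp⟩
  rw [Finset.sum_pair hij] at hpair
  obtain ⟨k4, k8, k16⟩ := pow_split hi2
  have hlow : 2 ^ (Nat.log 2 (n i) + 1) ≤ n i + n j := by
    rw [k8]; interval_cases w <;> omega
  have hupp : n i + n j < 2 ^ (Nat.log 2 (n i) + 1 + 1) := by
    have e : Nat.log 2 (n i) + 1 + 1 = Nat.log 2 (n i) + 2 := rfl
    rw [e, k16]; interval_cases w <;> omega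
  have hlog : Nat.log 2 (n i + n j) = Nat.log 2 (n i) + 1 :=
    Nat.log_eq_of_pow_le_of_lt_pow hlow hupp
  have hmod := hpair.1
  rw [hlog] at hmod
  omega

lemma inv_lemma (i : ℕ) (S : Finset ℕ)
    (hS : ∀ j ∈ S, Nat.log 2 (n j) < Nat.log 2 (n i)) :
    n i + ∑ j ∈ S, n j < (w + 1) * 2 ^ (Nat.log 2 (n i) - 2) := by
  classical
  induction S using Finset.induction_on with
  | empty => simpa using (single_spec hw4 hw8 n H i).2.2.2
  | @insert j S hjS ih =>
    have hSj : ∀ t ∈ S, Nat.log 2 (n t) < Nat.log 2 (n i) := fun t ht =>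
      hS t (Finset.mem_insert_of_mem ht)
    have ihv := ih hSj
    have hj : Nat.log 2 (n j) < Nat.log 2 (n i) := hS j (Finset.mem_insert_self _ _)
    have hij : i ≠ j := by
      intro h; rw [h] at hj; exact absurd hj (lt_irrefl _)
    obtain ⟨hi1, hi2, hi3, hi4⟩ := single_spec hw4 hw8 n H i
    obtain ⟨hj1, hj2, hj3, hj4⟩ := single_spec hw4 hw8 n H j
    have hmod : Nat.log 2 (n j) + 6 ≤ Nat.log 2 (n i) := by omega
    have hnj : n j < 2 ^ (Nat.log 2 (n i) - 5) := by
      have b1 : n j < 2 ^ (Nat.log 2 (n j) + 1) :=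
        Nat.lt_pow_succ_log_self (by norm_num) _
      have b2 : (2:ℕ) ^ (Nat.log 2 (n j) + 1) ≤ 2 ^ (Nat.log 2 (n i) - 5) :=
        Nat.pow_le_pow_right (by norm_num) (by omega)
      omega
    have hk5 : (2:ℕ) ^ (Nat.log 2 (n i) - 5) ≤ 2 ^ (Nat.log 2 (n i) - 2) :=
      Nat.pow_le_pow_right (by norm_num) (by omega)
    rw [Finset.sum_insert hjS]
    by_contra hcon
    push_neg at hcon
    have hiS : i ∉ insert j S := by
      intro hmem
      rcases Finset.mem_insert.mp hmem with h | h
      · exact hij h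
      · exact absurd (hSj i h) (lt_irrefl _)
    have hv' := H (insert i (insert j S)) ⟨i, Finset.mem_insert_self _ _⟩
    rw [Finset.sum_insert hiS, Finset.sum_insert hjS] at hv'
    obtain ⟨k4, k8, k16⟩ := pow_split hi2
    by_cases hw7 : w ≤ 6
    · have hb1 : 2 ^ (Nat.log 2 (n i)) ≤ n i + (n j + ∑ t ∈ S, n t) := by
        rw [k4]; interval_cases w <;> omega
      have hb2 : n i + (n j + ∑ t ∈ S, n t) < 2 ^ (Nat.log 2 (n i) + 1) := by
        rw [k8]; interval_cases w <;> omega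
      have hlogv : Nat.log 2 (n i + (n j + ∑ t ∈ S, n t)) = Nat.log 2 (n i) :=
        Nat.log_eq_of_pow_le_of_lt_pow hb1 hb2
      have hwin : (n i + (n j + ∑ t ∈ S, n t)) / 2 ^ (Nat.log 2 (n i) - 2) = w + 1 := by
        apply Nat.div_eq_of_lt_le
        · exact hcon
        · interval_cases w <;> omega
      have hwv := hv'.2
      rw [hlogv] at hwv
      omega
    · have hw7' : w = 7 := by omega
      subst hw7'
      have hb1 : 2 ^ (Nat.log 2 (n i) + 1) ≤ n i + (n j + ∑ t ∈ S, n t) := by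
        rw [k8]; omega
      have hb2 : n i + (n j + ∑ t ∈ S, n t) < 2 ^ (Nat.log 2 (n i) + 1 + 1) := by
        have e : Nat.log 2 (n i) + 1 + 1 = Nat.log 2 (n i) + 2 := rfl
        rw [e, k16]; omega
      have hlogv : Nat.log 2 (n i + (n j + ∑ t ∈ S, n t)) = Nat.log 2 (n i) + 1 :=
        Nat.log_eq_of_pow_le_of_lt_pow hb1 hb2
      have hmodv := hv'.1
      rw [hlogv] at hmodv
      omega

lemma dom_lemma (i : ℕ) (S : Finset ℕ)
    (hS : ∀ j ∈ S, Nat.log 2 (n j) < Nat.log 2 (n i)) :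
    4 * ∑ j ∈ S, n j < n i := by
  have hinv := inv_lemma hw4 hw8 n H i S hS
  obtain ⟨hi1, hi2, hi3, hi4⟩ := single_spec hw4 hw8 n H i
  obtain ⟨k4, -, -⟩ := pow_split hi2
  interval_cases w <;> omega

end Trap

lemma no_coll {r w : ℕ} (hw4 : 4 ≤ w) (hw8 : w < 8) (n : ℕ → ℕ)
    (H : ∀ S : Finset ℕ, S.Nonempty →
      Nat.log 2 (∑ j ∈ S, n j) % 6 = r ∧
      (∑ j ∈ S, n j) / 2 ^ (Nat.log 2 (∑ j ∈ S, n j) - 2) = w)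
    (E G0 G1 G2 : Finset ℕ) (hE : E.Nonempty) (h0 : Disjoint E G0)
    (h1 : Disjoint E G1) (h2 : Disjoint E G2) :
    (∑ j ∈ E, n j) + (∑ j ∈ G0, n j) + (∑ j ∈ G1, n j) ≠ ∑ j ∈ G2, n j := by
  classical
  suffices h : ∀ (k : ℕ) (E G0 G1 G2 : Finset ℕ), G0.card + G1.card + G2.card = k →
      E.Nonempty → Disjoint E G0 → Disjoint E G1 → Disjoint E G2 →
      (∑ j ∈ E, n j) + (∑ j ∈ G0, n j) + (∑ j ∈ G1, n j) ≠ ∑ j ∈ G2, n j by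
    exact h _ E G0 G1 G2 rfl hE h0 h1 h2
  intro k
  induction k using Nat.strong_induction_on with
  | _ k ih =>
    intro E G0 G1 G2 hcard hE h0 h1 h2 heq
    set M := E ∪ G0 ∪ G1 ∪ G2 with hM
    have hEM : E ⊆ M := by intro u hu; rw [hM]; simp [Finset.mem_union]; tauto
    have h0M : G0 ⊆ M := by intro u hu; rw [hM]; simp [Finset.mem_union]; tauto
    have h1M : G1 ⊆ M := by intro u hu; rw [hM]; simp [Finset.mem_union]; tauto
    have h2M : G2 ⊆ M := by intro u hu; rw [hM]; simp [Finset.mem_union]; tauto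
    have hMne : M.Nonempty := hE.mono hEM
    obtain ⟨t, htM, htmax⟩ := M.exists_max_image (fun i => Nat.log 2 (n i)) hMne
    have herase : ∀ j ∈ M.erase t, Nat.log 2 (n j) < Nat.log 2 (n t) := by
      intro j hj
      exact lt_of_le_of_ne (htmax j (Finset.mem_of_mem_erase hj))
        (scale_ne hw4 hw8 n H (Finset.ne_of_mem_erase hj))
    have hdom : 4 * ∑ j ∈ M.erase t, n j < n t := dom_lemma hw4 hw8 n H t _ herase
    have hsub : ∀ T : Finset ℕ, T ⊆ M → t ∉ T →
        (∑ j ∈ T, n j) ≤ ∑ j ∈ M.erase t, n j := by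
      intro T hTM htT
      apply Finset.sum_le_sum_of_subset
      intro u hu
      exact Finset.mem_erase.mpr ⟨fun h => htT (h ▸ hu), hTM hu⟩
    by_cases ht2 : t ∈ G2
    · have htE : t ∉ E := fun h => (Finset.disjoint_left.mp h2) h ht2
      by_cases ht0 : t ∈ G0
      · have e0 : ∑ j ∈ G0, n j = n t + ∑ j ∈ G0.erase t, n j :=
          (Finset.add_sum_erase _ _ ht0).symm
        have e2 : ∑ j ∈ G2, n j = n t + ∑ j ∈ G2.erase t, n j :=
          (Finset.add_sum_erase _ _ ht2).symm
        have hlt : (G0.erase t).card + G1.card + (G2.erase t).card < k := by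
          rw [Finset.card_erase_of_mem ht0, Finset.card_erase_of_mem ht2]
          have c0 : 0 < G0.card := Finset.card_pos.mpr ⟨t, ht0⟩
          have c2 : 0 < G2.card := Finset.card_pos.mpr ⟨t, ht2⟩
          omega
        exact ih _ hlt E (G0.erase t) G1 (G2.erase t) rfl hE
          (h0.mono_right (Finset.erase_subset _ _)) h1
          (h2.mono_right (Finset.erase_subset _ _)) (by omega)
      · by_cases ht1 : t ∈ G1
        · have e1 : ∑ j ∈ G1, n j = n t + ∑ j ∈ G1.erase t, n j :=
            (Finset.add_sum_erase _ _ ht1).symm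
          have e2 : ∑ j ∈ G2, n j = n t + ∑ j ∈ G2.erase t, n j :=
            (Finset.add_sum_erase _ _ ht2).symm
          have hlt : G0.card + (G1.erase t).card + (G2.erase t).card < k := by
            rw [Finset.card_erase_of_mem ht1, Finset.card_erase_of_mem ht2]
            have c1 : 0 < G1.card := Finset.card_pos.mpr ⟨t, ht1⟩
            have c2 : 0 < G2.card := Finset.card_pos.mpr ⟨t, ht2⟩
            omega
          exact ih _ hlt E G0 (G1.erase t) (G2.erase t) rfl hE h0
            (h1.mono_right (Finset.erase_subset _ _))
            (h2.mono_right (Finset.erase_subset _ _)) (by omega)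
        · have hs0 : ∑ j ∈ G0, n j ≤ ∑ j ∈ M.erase t, n j := hsub G0 h0M ht0
          have hs1 : ∑ j ∈ G1, n j ≤ ∑ j ∈ M.erase t, n j := hsub G1 h1M ht1
          have hsE : ∑ j ∈ E, n j ≤ ∑ j ∈ M.erase t, n j := hsub E hEM htE
          have hnt : n t ≤ ∑ j ∈ G2, n j :=
            Finset.single_le_sum (fun _ _ => Nat.zero_le _) ht2
          omega
    · have hsG2 : ∑ j ∈ G2, n j ≤ ∑ j ∈ M.erase t, n j := hsub G2 h2M ht2
      have htEG : t ∈ E ∨ t ∈ G0 ∨ t ∈ G1 := by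
        have h' := htM
        rw [hM] at h'
        simp [Finset.mem_union] at h'
        tauto
      have hnt : n t ≤ (∑ j ∈ E, n j) + (∑ j ∈ G0, n j) + (∑ j ∈ G1, n j) := by
        rcases htEG with h | h | h
        · have := Finset.single_le_sum (f := n) (fun _ _ => Nat.zero_le _) h; omega
        · have := Finset.single_le_sum (f := n) (fun _ _ => Nat.zero_le _) h; omega
        · have := Finset.single_le_sum (f := n) (fun _ _ => Nat.zero_le _) h; omega
      omega

lemma nonpr (V : Ultrafilter ℤ) (hV : StronglySummable V) (z : ℤ) : {z} ∉ V := by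
  intro hz
  obtain ⟨x, hinj, hsub, -⟩ := hV {z} hz
  have h0 : x 0 = z := by
    have : x 0 ∈ ({z} : Set ℤ) :=
      hsub ⟨{0}, ⟨0, Finset.mem_singleton_self 0⟩, Finset.sum_singleton x 0⟩
    simpa using this
  have h1 : x 1 = z := by
    have : x 1 ∈ ({z} : Set ℤ) :=
      hsub ⟨{1}, ⟨1, Finset.mem_singleton_self 1⟩, Finset.sum_singleton x 1⟩
    simpa using this
  exact absurd (hinj (h0.trans h1.symm)) (by norm_num)

lemma cover_pos : {z : ℤ | 0 < z} ⊆
    ⋃ p ∈ ((Finset.range 6 ×ˢ Finset.range 8 : Finset (ℕ × ℕ)) : Set (ℕ × ℕ)),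
      cls p.1 p.2 := by
  intro b hb
  have hb' : (0:ℤ) < b := hb
  have hvpos : 0 < b.toNat := by omega
  have hvlt : b.toNat < 2 ^ (Nat.log 2 b.toNat + 1) :=
    Nat.lt_pow_succ_log_self (by norm_num) b.toNat
  have hw8 : b.toNat / 2 ^ (Nat.log 2 b.toNat - 2) < 8 := by
    apply (Nat.div_lt_iff_lt_mul (Nat.pow_pos (by norm_num))).mpr
    by_cases h2 : 2 ≤ Nat.log 2 b.toNat
    · obtain ⟨-, k8, -⟩ := pow_split h2
      omega
    · have h0 : Nat.log 2 b.toNat - 2 = 0 := by omega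
      have hle : (2:ℕ) ^ (Nat.log 2 b.toNat + 1) ≤ 2 ^ 2 :=
        Nat.pow_le_pow_right (by norm_num) (by omega)
      rw [h0, pow_zero]
      norm_num at hle ⊢
      omega
  have hx : ((Nat.log 2 b.toNat % 6, b.toNat / 2 ^ (Nat.log 2 b.toNat - 2)) : ℕ × ℕ) ∈
      ((Finset.range 6 ×ˢ Finset.range 8 : Finset (ℕ × ℕ)) : Set (ℕ × ℕ)) :=
    Finset.mem_coe.mpr (Finset.mem_product.mpr
      ⟨Finset.mem_range.mpr (Nat.mod_lt _ (by norm_num)), Finset.mem_range.mpr hw8⟩)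
  exact Set.mem_biUnion hx ⟨hb', rfl, rfl⟩

lemma exists_cell (V : Ultrafilter ℤ) (hne : ∀ z : ℤ, {z} ∉ V)
    (hpos : {z : ℤ | 0 < z} ∈ V) :
    ∃ r w : ℕ, 4 ≤ w ∧ w < 8 ∧ cls r w ∈ V := by
  have hcov := Filter.mem_of_superset hpos cover_pos
  obtain ⟨⟨r, w⟩, hrw, hcls⟩ :=
    (Ultrafilter.finite_biUnion_mem_iff (Finset.finite_toSet _)).mp hcov
  refine ⟨r, w, ?_, ?_, hcls⟩
  · by_contra hlt
    push_neg at hlt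
    have hsub : cls r w ⊆ ({1} ∪ ({2} ∪ {3}) : Set ℤ) := by
      intro b hb
      obtain ⟨hb0, hbr, hbw⟩ := hb
      have hlt4 : b.toNat < 4 := by
        by_contra hge
        push_neg at hge
        have h2 : 2 ≤ Nat.log 2 b.toNat := by
          have h4 : (2:ℕ) ^ 2 ≤ b.toNat := by norm_num; omega
          exact (Nat.le_log_iff_pow_le (by norm_num) (by omega)).mpr h4
        obtain ⟨k4, -, -⟩ := pow_split h2
        have hself : 2 ^ Nat.log 2 b.toNat ≤ b.toNat :=
          Nat.pow_log_le_self 2 (by omega)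
        have hk : 0 < 2 ^ (Nat.log 2 b.toNat - 2) :=
          Nat.pow_pos (by norm_num)
        have h4le : 4 ≤ b.toNat / 2 ^ (Nat.log 2 b.toNat - 2) :=
          (Nat.le_div_iff_mul_le hk).mpr (by omega)
        omega
      have : b = 1 ∨ b = 2 ∨ b = 3 := by omega
      rcases this with h | h | h <;> simp [h]
    have hU := Filter.mem_of_superset hcls hsub
    rcases (Ultrafilter.union_mem_iff).mp hU with h | h
    · exact hne 1 h
    rcases (Ultrafilter.union_mem_iff).mp h with h' | h'
    · exact hne 2 h'
    · exact hne 3 h'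
  · exact Finset.mem_range.mp (Finset.mem_product.mp (Finset.mem_coe.mp hrw)).2

lemma good (V : Ultrafilter ℤ) (hV : StronglySummable V) {r w : ℕ}
    (hw4 : 4 ≤ w) (hw8 : w < 8) (hcls : cls r w ∈ V) (hne : ∀ z : ℤ, {z} ∉ V) :
    ∀ A : Set ℤ, A ∈ V → {a : ℤ | {b : ℤ | a + b ∈ A} ∈ V} ∈ V := by
  intro A hA
  obtain ⟨x, hxinj, hxsub, hxU⟩ := hV (A ∩ cls r w) (Filter.inter_mem hA hcls)
  have hFSA : FS x ⊆ A := fun s hs => (hxsub hs).1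
  have hFScls : FS x ⊆ cls r w := fun s hs => (hxsub hs).2
  set n : ℕ → ℕ := fun i => (x i).toNat with hn
  have hsum : ∀ S : Finset ℕ, S.Nonempty → (∑ j ∈ S, x j) ∈ cls r w := by
    intro S hS; exact hFScls ⟨S, hS, rfl⟩
  have hpos : ∀ i, 0 < x i := by
    intro i
    have h := hsum {i} ⟨i, Finset.mem_singleton_self i⟩
    rw [Finset.sum_singleton] at h
    exact h.1
  have hcast : ∀ S : Finset ℕ, ((∑ j ∈ S, n j : ℕ) : ℤ) = ∑ j ∈ S, x j := by
    intro S
    rw [Nat.cast_sum]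
    exact Finset.sum_congr rfl fun j _ => Int.toNat_of_nonneg (hpos j).le
  have Hn : ∀ S : Finset ℕ, S.Nonempty →
      Nat.log 2 (∑ j ∈ S, n j) % 6 = r ∧
      (∑ j ∈ S, n j) / 2 ^ (Nat.log 2 (∑ j ∈ S, n j) - 2) = w := by
    intro S hS
    have h := hsum S hS
    have ht : (∑ j ∈ S, x j).toNat = ∑ j ∈ S, n j := by
      rw [← hcast S, Int.toNat_natCast]
    obtain ⟨-, h2, h3⟩ := h
    rw [ht] at h2 h3
    exact ⟨h2, h3⟩
  apply Filter.mem_of_superset hxU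
  rintro a ⟨F, hF, rfl⟩
  have hcov : FS x ⊆ ⋃ E ∈ ((F.powerset : Finset (Finset ℕ)) : Set (Finset ℕ)),
      {v : ℤ | ∃ G : Finset ℕ, Disjoint G F ∧ v = ∑ j ∈ E, x j + ∑ j ∈ G, x j} := by
    rintro b ⟨R, hR, rfl⟩
    have hx : (R ∩ F) ∈ ((F.powerset : Finset (Finset ℕ)) : Set (Finset ℕ)) :=
      Finset.mem_coe.mpr (Finset.mem_powerset.mpr Finset.inter_subset_right)
    exact Set.mem_biUnion hx
      ⟨R \ F, Finset.sdiff_disjoint, (Finset.sum_inter_add_sum_sdiff R F x).symm⟩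
  have hU2 := Filter.mem_of_superset hxU hcov
  obtain ⟨E, hEF, hTE⟩ :=
    (Ultrafilter.finite_biUnion_mem_iff (Finset.finite_toSet _)).mp hU2
  have hEF' : E ⊆ F := Finset.mem_powerset.mp (Finset.mem_coe.mp hEF)
  rcases E.eq_empty_or_nonempty with rfl | hEne
  · have h0c : ({(0:ℤ)}ᶜ : Set ℤ) ∈ V := Ultrafilter.compl_mem_iff_notMem.mpr (hne 0)
    have hmem : ({v : ℤ | ∃ G, Disjoint G F ∧
        v = ∑ j ∈ (∅ : Finset ℕ), x j + ∑ j ∈ G, x j} ∩ {0}ᶜ) ∈ V :=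
      Filter.inter_mem hTE h0c
    refine Filter.mem_of_superset hmem ?_
    rintro m ⟨⟨G, hGF, hGm⟩, hm0⟩
    rw [Finset.sum_empty, zero_add] at hGm
    have hGne : G.Nonempty := by
      rcases G.eq_empty_or_nonempty with rfl | h
      · rw [Finset.sum_empty] at hGm
        exact absurd hGm (by simpa using hm0)
      · exact h
    show (∑ t ∈ F, x t) + m ∈ A
    rw [hGm, ← Finset.sum_union hGF.symm]
    exact hFSA ⟨F ∪ G, hF.mono Finset.subset_union_left, rfl⟩
  · exfalso
    obtain ⟨z, hzinj, hzsub, -⟩ := hV _ hTE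
    have hz : ∀ (S : Finset ℕ), S.Nonempty → ∃ G, Disjoint G F ∧
        (∑ j ∈ S, z j) = ∑ j ∈ E, x j + ∑ j ∈ G, x j :=
      fun S hS => hzsub ⟨S, hS, rfl⟩
    obtain ⟨G0, hG0, e0⟩ := hz {0} ⟨0, Finset.mem_singleton_self 0⟩
    obtain ⟨G1, hG1, e1⟩ := hz {1} ⟨1, Finset.mem_singleton_self 1⟩
    obtain ⟨G2, hG2, e2⟩ := hz {0, 1} ⟨0, by simp⟩
    rw [Finset.sum_singleton] at e0 e1
    rw [Finset.sum_pair (by norm_num : (0:ℕ) ≠ 1)] at e2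
    have heqZ : (∑ j ∈ E, x j) + (∑ j ∈ G0, x j) + (∑ j ∈ G1, x j)
        = ∑ j ∈ G2, x j := by
      rw [e0, e1] at e2
      linarith
    have heqN : (∑ j ∈ E, n j) + (∑ j ∈ G0, n j) + (∑ j ∈ G1, n j)
        = ∑ j ∈ G2, n j := by
      have hc : (((∑ j ∈ E, n j) + (∑ j ∈ G0, n j) + (∑ j ∈ G1, n j) : ℕ) : ℤ)
          = ((∑ j ∈ G2, n j : ℕ) : ℤ) := by
        rw [Nat.cast_add, Nat.cast_add, hcast, hcast, hcast, hcast]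
        exact heqZ
      exact_mod_cast hc
    exact no_coll hw4 hw8 n Hn E G0 G1 G2 hEne
      (hG0.symm.mono_left hEF') (hG1.symm.mono_left hEF')
      (hG2.symm.mono_left hEF') heqN

lemma key_pos (V : Ultrafilter ℤ) (hV : StronglySummable V)
    (hpos : {z : ℤ | 0 < z} ∈ V) : uadd V V = V := by
  have hne := nonpr V hV
  obtain ⟨r, w, hw4, hw8, hcls⟩ := exists_cell V hne hpos
  have main : ∀ A ∈ V, A ∈ uadd V V := by
    intro A hA
    rw [mem_uadd_iff]
    exact good V hV hw4 hw8 hcls hne A hA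
  exact Ultrafilter.coe_le_coe.mp fun s hs => main s hs

lemma ss_neg (U : Ultrafilter ℤ) (hU : StronglySummable U) :
    StronglySummable (Ultrafilter.map Neg.neg U) := by
  intro A hA
  rw [Ultrafilter.mem_map] at hA
  obtain ⟨x, hinj, hsub, hmem⟩ := hU _ hA
  refine ⟨fun k => -(x k), fun a b h => hinj (neg_injective h), ?_, ?_⟩
  · rintro s ⟨S, hS, rfl⟩
    have he : ∑ t ∈ S, (fun k => -(x k)) t = -(∑ t ∈ S, x t) := by
      simp
    rw [he]
    exact hsub ⟨S, hS, rfl⟩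
  · rw [Ultrafilter.mem_map]
    apply Filter.mem_of_superset hmem
    rintro s ⟨S, hS, rfl⟩
    exact ⟨S, hS, by simp⟩

lemma uadd_map_neg (U V : Ultrafilter ℤ) :
    uadd (Ultrafilter.map Neg.neg U) (Ultrafilter.map Neg.neg V)
      = Ultrafilter.map Neg.neg (uadd U V) := by
  apply Ultrafilter.ext
  intro A
  simp only [mem_uadd_iff, Ultrafilter.mem_map, Set.preimage_setOf_eq, Set.mem_preimage,
    neg_add]

theorem stronglySummable_idempotent' (U : Ultrafilter ℤ)
    (hU : StronglySummable U) : uadd U U = U := by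
  have hne := nonpr U hU
  have h0 : ({(0:ℤ)}ᶜ : Set ℤ) ∈ U := Ultrafilter.compl_mem_iff_notMem.mpr (hne 0)
  have hun : ({z : ℤ | 0 < z} ∪ {z : ℤ | z < 0}) ∈ U := by
    apply Filter.mem_of_superset h0
    intro z hz
    simp only [Set.mem_compl_iff, Set.mem_singleton_iff] at hz
    simp only [Set.mem_union, Set.mem_setOf_eq]
    omega
  rcases (Ultrafilter.union_mem_iff).mp hun with hpos | hneg
  · exact key_pos U hU hpos
  · have hU' : StronglySummable (Ultrafilter.map Neg.neg U) := ss_neg U hU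
    have hpos' : {z : ℤ | 0 < z} ∈ Ultrafilter.map Neg.neg U := by
      rw [Ultrafilter.mem_map]
      apply Filter.mem_of_superset hneg
      intro z hz
      simp only [Set.mem_setOf_eq] at hz
      simp only [Set.mem_preimage, Set.mem_setOf_eq]
      omega
    have h' := key_pos _ hU' hpos'
    rw [uadd_map_neg] at h'
    have h'' := congrArg (Ultrafilter.map Neg.neg) h'
    rw [Ultrafilter.map_map, Ultrafilter.map_map] at h''
    have hid : (Neg.neg ∘ Neg.neg : ℤ → ℤ) = id := funext fun z => neg_neg z
    rw [hid, Ultrafilter.map_id, Ultrafilter.map_id] at h''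
    exact h''


/-- Every strongly summable ultrafilter on ℤ is additively idempotent. -/
theorem stronglySummable_idempotent (U : Ultrafilter ℤ)
    (hU : StronglySummable U) : uadd U U = U := by
  exact stronglySummable_idempotent' U hU
end

section
/- Let k ≥ 4 and let U be a strongly summable ultrafilter on ℤ and A ∈ U. Then there is an injective sequence (x_n)_{n∈ℕ} of integers such that: (1) FS((x_n)_{n∈ℕ}) ⊆ A; (2) for each m, FS((x_n)_{n≥m}) ∈ U; (3) for each n, |x_{n+1}| > k·|∑_{t=1}^{n} x_t|. -/
/-- Tail finite sums: over nonempty finite index sets contained in `{m, m+1, …}`. -/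
def FSfrom (x : ℕ → ℤ) (m : ℕ) : Set ℤ :=
  {s | ∃ F : Finset ℕ, F.Nonempty ∧ (∀ t ∈ F, m ≤ t) ∧ ∑ t ∈ F, x t = s}

open Finset

/-- indicator of a finite set, ℤ-valued -/
def ind (F : Finset ℕ) (i : ℕ) : ℤ := if i ∈ F then 1 else 0

/-- finite sums avoiding a finite index set -/
def FSE (x : ℕ → ℤ) (E : Finset ℕ) : Set ℤ :=
  {s | ∃ F : Finset ℕ, F.Nonempty ∧ (∀ t ∈ F, t ∉ E) ∧ ∑ t ∈ F, x t = s}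

lemma sum_mem_FS (x : ℕ → ℤ) {F : Finset ℕ} (hF : F.Nonempty) :
    (∑ t ∈ F, x t) ∈ FS x := ⟨F, hF, rfl⟩

lemma single_mem_FS (x : ℕ → ℤ) (i : ℕ) : x i ∈ FS x :=
  ⟨{i}, ⟨i, mem_singleton_self i⟩, by simp⟩

lemma pair_mem_FS (x : ℕ → ℤ) {i j : ℕ} (h : i ≠ j) : x i + x j ∈ FS x :=
  ⟨{i, j}, ⟨i, by simp⟩, by rw [Finset.sum_pair h]⟩

lemma geom_pow_sum (R : ℕ) (hR : 1 ≤ R) :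
    ∀ M : ℕ, (∑ m ∈ range M, (2:ℤ)^(R*m)) ≤ 2^(R*(M-1)+1) := by
  intro M
  induction M with
  | zero => simp
  | succ M ih =>
    rw [Finset.sum_range_succ]
    rcases Nat.eq_zero_or_pos M with hM | hM
    · subst hM; norm_num
    · have h1 : R*(M-1)+1 ≤ R*M := by
        have : R*(M-1) + R ≤ R*M := by
          rw [← Nat.mul_succ]
          exact Nat.mul_le_mul_left R (by omega)
        omega
      have h2 : (∑ m ∈ range M, (2:ℤ)^(R*m)) ≤ 2^(R*M) :=
        le_trans ih (pow_le_pow_right₀ (by norm_num) h1)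
      have h3 : (M+1)-1 = M := by omega
      rw [h3]
      have : (2:ℤ)^(R*M) + 2^(R*M) = 2^(R*M+1) := by ring
      linarith

section Scales

variable (R r : ℕ) (β : ℕ → ℤ) (s : ℕ → ℕ)

/-- bound on a sum of elements with distinct scales below M -/
lemma sum_beta_lt (hR : 1 ≤ R) (hsinj : Function.Injective s)
    (hhigh : ∀ i, β i < 2^(R * s i + r + 1)) (M : ℕ) (E : Finset ℕ)
    (hE : ∀ i ∈ E, s i < M) :
    ∑ i ∈ E, β i < 2^(R*(M-1)+r+2) := by
  have hstep : ∑ i ∈ E, β i ≤ ∑ i ∈ E, ((2:ℤ)^(R * s i + r + 1) - 1) :=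
    Finset.sum_le_sum (fun i _ => by have := hhigh i; omega)
  have hre : ∑ i ∈ E, ((2:ℤ)^(R * s i + r + 1)) = ∑ m ∈ E.image s, (2:ℤ)^(R*m+r+1) := by
    rw [Finset.sum_image (fun a _ b _ h => hsinj h)]
  have hsub : E.image s ⊆ range M := by
    intro m hm
    obtain ⟨i, hi, rfl⟩ := Finset.mem_image.1 hm
    exact Finset.mem_range.2 (hE i hi)
  have h2 : ∑ m ∈ E.image s, (2:ℤ)^(R*m+r+1) ≤ ∑ m ∈ range M, (2:ℤ)^(R*m+r+1) :=
    Finset.sum_le_sum_of_subset_of_nonneg hsub (fun _ _ _ => by positivity)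
  have h3 : ∑ m ∈ range M, (2:ℤ)^(R*m+r+1) = (2:ℤ)^(r+1) * ∑ m ∈ range M, (2:ℤ)^(R*m) := by
    rw [Finset.mul_sum]
    congr 1; funext m; rw [← pow_add]; ring_nf
  have h4 := geom_pow_sum R hR M
  have h5 : (2:ℤ)^(r+1) * (∑ m ∈ range M, (2:ℤ)^(R*m)) ≤ 2^(r+1) * 2^(R*(M-1)+1) :=
    mul_le_mul_of_nonneg_left h4 (by positivity)
  have h6 : (2:ℤ)^(r+1) * 2^(R*(M-1)+1) = 2^(R*(M-1)+r+2) := by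
    rw [← pow_add]; congr 1; omega
  have hpos : (0:ℤ) < 2^(R*(M-1)+r+2) := by positivity
  rcases E.eq_empty_or_nonempty with rfl | hne
  · simpa using hpos
  · have hstrict : ∑ i ∈ E, β i < ∑ i ∈ E, ((2:ℤ)^(R * s i + r + 1)) :=
      Finset.sum_lt_sum_of_nonempty hne (fun i _ => hhigh i)
    calc ∑ i ∈ E, β i < ∑ i ∈ E, ((2:ℤ)^(R * s i + r + 1)) := hstrict
      _ = _ := hre
      _ ≤ _ := h2
      _ = _ := h3
      _ ≤ _ := h5
      _ = _ := h6

/-- coefficient uniqueness with coefficients bounded by 2 -/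
lemma keycu (hR : 4 ≤ R) (hsinj : Function.Injective s)
    (hlow : ∀ i, (2:ℤ)^(R * s i + r) ≤ β i)
    (hhigh : ∀ i, β i < 2^(R * s i + r + 1)) :
    ∀ (n : ℕ) (T : Finset ℕ) (c : ℕ → ℤ), T.card ≤ n → (∀ i, |c i| ≤ 2) →
      ∑ i ∈ T, c i * β i = 0 → ∀ i ∈ T, c i = 0 := by
  intro n
  induction n with
  | zero =>
    intro T c hcard _ _ i hi
    rw [Finset.card_eq_zero.1 (Nat.le_zero.1 hcard)] at hi; exact absurd hi (notMem_empty i)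
  | succ n ih =>
    intro T c hcard hc hsum i hi
    have hTne : T.Nonempty := ⟨i, hi⟩
    obtain ⟨j, hjT, hjmax⟩ := Finset.exists_max_image T s hTne
    -- show c j = 0
    have hcj : c j = 0 := by
      by_contra hcj
      have h1 : (1:ℤ) ≤ |c j| := by
        have h0 : (0:ℤ) < |c j| := abs_pos.2 hcj
        omega
      have hbj : (2:ℤ)^(R * s j + r) ≤ |c j * β j| := by
        rw [abs_mul]
        have hb : (0:ℤ) < β j := lt_of_lt_of_le (by positivity) (hlow j)
        rw [abs_of_pos hb]
        calc (2:ℤ)^(R * s j + r) = 1 * 2^(R * s j + r) := by ring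
          _ ≤ |c j| * β j := by
            apply mul_le_mul h1 (hlow j) (by positivity) (abs_nonneg _)
      have hsplit : c j * β j + ∑ i ∈ T.erase j, c i * β i = 0 := by
        rw [← hsum]; exact Finset.add_sum_erase T (fun i => c i * β i) hjT
      have habs : |c j * β j| = |∑ i ∈ T.erase j, c i * β i| := by
        have : c j * β j = -(∑ i ∈ T.erase j, c i * β i) := by linarith
        rw [this, abs_neg]
      have hbound : |∑ i ∈ T.erase j, c i * β i| ≤ 2 * ∑ i ∈ T.erase j, β i := by
        calc |∑ i ∈ T.erase j, c i * β i| ≤ ∑ i ∈ T.erase j, |c i * β i| :=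
              Finset.abs_sum_le_sum_abs _ _
          _ ≤ ∑ i ∈ T.erase j, 2 * β i := by
              apply Finset.sum_le_sum
              intro i _
              rw [abs_mul]
              have hb : (0:ℤ) < β i := lt_of_lt_of_le (by positivity) (hlow i)
              rw [abs_of_pos hb]
              exact mul_le_mul_of_nonneg_right (hc i) (le_of_lt hb)
          _ = 2 * ∑ i ∈ T.erase j, β i := by rw [Finset.mul_sum]
      have hscales : ∀ i ∈ T.erase j, s i < s j := by
        intro i' hi'
        have hne := Finset.ne_of_mem_erase hi'
        have := hjmax i' (Finset.mem_of_mem_erase hi')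
        exact lt_of_le_of_ne this (fun h => hne (hsinj h))
      have hgb := sum_beta_lt R r β s (by omega) hsinj hhigh (s j) (T.erase j) hscales
      -- 2 * sum < 2^(R*(s j -1)+r+3) ≤ 2^(R* s j + r)
      rcases Nat.eq_zero_or_pos (s j) with hs0 | hs1
      · -- then erase is empty
        have : T.erase j = ∅ := by
          rw [Finset.eq_empty_iff_forall_notMem]
          intro i' hi'
          exact absurd (hscales i' hi') (by omega)
        rw [this] at hsplit
        simp at hsplit
        have hb : (0:ℤ) < β j := lt_of_lt_of_le (by positivity) (hlow j)
        rcases hsplit with h | h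
        · exact hcj h
        · exact absurd h (ne_of_gt hb)
      · have hfin : 2 * ∑ i ∈ T.erase j, β i < 2^(R * s j + r) := by
          have e1 : (2:ℤ) * ∑ i ∈ T.erase j, β i < 2 * 2^(R*(s j - 1)+r+2) := by linarith
          have e2 : (2:ℤ) * 2^(R*(s j - 1)+r+2) = 2^(R*(s j - 1)+r+3) := by ring
          have e3 : R*(s j - 1)+r+3 ≤ R * s j + r := by
            have : R*(s j - 1) + R ≤ R * s j := by
              rw [← Nat.mul_succ]; exact Nat.mul_le_mul_left R (by omega)
            omega
          have e4 : (2:ℤ)^(R*(s j - 1)+r+3) ≤ 2^(R * s j + r) :=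
            pow_le_pow_right₀ (by norm_num) e3
          linarith
        have : |c j * β j| < 2^(R * s j + r) := by
          rw [habs]; exact lt_of_le_of_lt hbound hfin
        linarith
    rcases eq_or_ne i j with rfl | hij
    · exact hcj
    · have hcard' : (T.erase j).card ≤ n := by
        have := Finset.card_erase_of_mem hjT
        omega
      have hsum' : ∑ i ∈ T.erase j, c i * β i = 0 := by
        have h2 : c j * β j + ∑ i ∈ T.erase j, c i * β i = 0 := by
          rw [← hsum]; exact Finset.add_sum_erase T (fun i => c i * β i) hjT
        rw [hcj] at h2; simpa using h2
      exact ih (T.erase j) c hcard' hc hsum' i (Finset.mem_erase.2 ⟨hij, hi⟩)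

end Scales

lemma indicator_sum (β : ℕ → ℤ) (F T : Finset ℕ) (hFT : F ⊆ T) :
    ∑ i ∈ T, ind F i * β i = ∑ i ∈ F, β i := by
  have h1 : ∀ i ∈ T, ind F i * β i = if i ∈ F then β i else 0 := by
    intro i _
    unfold ind
    split <;> simp
  rw [Finset.sum_congr rfl h1, Finset.sum_ite_mem, Finset.inter_eq_right.2 hFT]

/-- the 4-finset coefficient-uniqueness statement -/
def CU (β : ℕ → ℤ) : Prop :=
  ∀ F1 F2 F3 F4 : Finset ℕ,
    (∑ t ∈ F1, β t) + ∑ t ∈ F2, β t = (∑ t ∈ F3, β t) + ∑ t ∈ F4, β t →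
    ∀ i, ind F1 i + ind F2 i = ind F3 i + ind F4 i

lemma cu_of_scales (R r : ℕ) (β : ℕ → ℤ) (s : ℕ → ℕ) (hR : 4 ≤ R)
    (hsinj : Function.Injective s)
    (hlow : ∀ i, (2:ℤ)^(R * s i + r) ≤ β i)
    (hhigh : ∀ i, β i < 2^(R * s i + r + 1)) : CU β := by
  intro F1 F2 F3 F4 hsum i
  set T := ((F1 ∪ F2) ∪ F3) ∪ F4 with hT
  have hs1 : F1 ⊆ T := by intro a ha; simp [hT, ha]
  have hs2 : F2 ⊆ T := by intro a ha; simp [hT, ha]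
  have hs3 : F3 ⊆ T := by intro a ha; simp [hT, ha]
  have hs4 : F4 ⊆ T := by intro a ha; simp [hT, ha]
  set c : ℕ → ℤ := fun i => ind F1 i + ind F2 i - ind F3 i - ind F4 i with hcdef
  have hbound : ∀ i, |c i| ≤ 2 := by
    intro i
    simp only [hcdef]
    unfold ind
    split <;> split <;> split <;> split <;> norm_num
  have hzero : ∑ i ∈ T, c i * β i = 0 := by
    have expand : ∀ i ∈ T, c i * β i =
        ind F1 i * β i + ind F2 i * β i - ind F3 i * β i - ind F4 i * β i := by
      intro i _; simp only [hcdef]; ring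
    rw [Finset.sum_congr rfl expand]
    rw [Finset.sum_sub_distrib, Finset.sum_sub_distrib, Finset.sum_add_distrib]
    rw [indicator_sum β F1 T hs1, indicator_sum β F2 T hs2,
        indicator_sum β F3 T hs3, indicator_sum β F4 T hs4]
    linarith
  by_cases hiT : i ∈ T
  · have := keycu R r β s hR hsinj hlow hhigh T.card T c le_rfl hbound hzero i hiT
    simp only [hcdef] at this
    linarith
  · have h1 : i ∉ F1 := fun h => hiT (hs1 h)
    have h2 : i ∉ F2 := fun h => hiT (hs2 h)
    have h3 : i ∉ F3 := fun h => hiT (hs3 h)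
    have h4 : i ∉ F4 := fun h => hiT (hs4 h)
    simp [ind, h1, h2, h3, h4]

/-- singleton sets are not in a strongly summable ultrafilter -/
lemma not_singleton_mem (U : Ultrafilter ℤ) (hU : StronglySummable U) (a : ℤ) :
    ({a} : Set ℤ) ∉ U := by
  intro h
  obtain ⟨x, hinj, hsub, -⟩ := hU {a} h
  have h0 : x 0 = a := hsub (single_mem_FS x 0)
  have h1 : x 1 = a := hsub (single_mem_FS x 1)
  exact absurd (hinj (h0.trans h1.symm)) (by norm_num)

/-- THE TAILS LEMMA: for β with coefficient uniqueness, FS over the complement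
of any finite index set is in U. -/
lemma tails_lemma (U : Ultrafilter ℤ) (hU : StronglySummable U) (β : ℕ → ℤ)
    (hFS : FS β ∈ U) (hcu : CU β) (E : Finset ℕ) : FSE β E ∈ U := by
  by_contra hne
  -- cells
  set cell : Finset ℕ → Set ℤ := fun G =>
    {s | ∃ H : Finset ℕ, (∀ t ∈ H, t ∉ E) ∧ (∑ t ∈ G, β t) + ∑ t ∈ H, β t = s} with hcell
  set idx : Set (Finset ℕ) := {G | G ∈ E.powerset ∧ G.Nonempty} with hidx
  have hcover : FS β ⊆ FSE β E ∪ ⋃ G ∈ idx, cell G := by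
    rintro t ⟨F, hFne, hFsum⟩
    by_cases hG : (F ∩ E).Nonempty
    · right
      refine Set.mem_biUnion (show F ∩ E ∈ idx from ⟨Finset.mem_powerset.2 (Finset.inter_subset_right), hG⟩) ?_
      refine ⟨F \ E, fun u hu => (Finset.mem_sdiff.1 hu).2, ?_⟩
      rw [Finset.sum_inter_add_sum_sdiff]
      exact hFsum
    · left
      refine ⟨F, hFne, ?_, hFsum⟩
      intro u hu hum
      exact hG ⟨u, Finset.mem_inter.2 ⟨hu, hum⟩⟩
  have hidxfin : idx.Finite := Set.Finite.subset (E.powerset : Finset (Finset ℕ)).finite_toSet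
      (fun G hG => hG.1)
  have hBig : (⋃ G ∈ idx, cell G) ∈ U := by
    have hc : (FSE β E)ᶜ ∈ U := (Ultrafilter.compl_mem_iff_notMem).2 hne
    refine Filter.mem_of_superset (Filter.inter_mem hFS hc) ?_
    rintro t ⟨h1, h2⟩
    rcases hcover h1 with h | h
    · exact absurd h h2
    · exact h
  obtain ⟨G, hGidx, hGmem⟩ := (Ultrafilter.finite_biUnion_mem_iff hidxfin).1 hBig
  have hGE : G ⊆ E := Finset.mem_powerset.1 hGidx.1
  obtain ⟨i, hiG⟩ := hGidx.2
  -- strong summability inside the cell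
  obtain ⟨z, hzinj, hzsub, -⟩ := hU (cell G ∩ FS β) (Filter.inter_mem hGmem hFS)
  obtain ⟨⟨H0, hH0E, e0⟩, F0, hF0ne, f0⟩ := hzsub (single_mem_FS z 0)
  obtain ⟨⟨H1, hH1E, e1⟩, F1, hF1ne, f1⟩ := hzsub (single_mem_FS z 1)
  obtain ⟨⟨H01, hH01E, e01⟩, F01, hF01ne, f01⟩ := hzsub (pair_mem_FS z (by norm_num : (0:ℕ) ≠ 1))
  -- three CU relations evaluated at i
  have I1 := hcu F01 ∅ F0 F1 (by
    simp only [Finset.sum_empty]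
    rw [f01, f0, f1]; ring) i
  have I2 := hcu F0 H01 F01 H0 (by linarith [e0, e01, f0, f01]) i
  have I3 := hcu G H1 F1 (∅ : Finset ℕ) (by
    simp only [Finset.sum_empty]
    linarith [e1, f1]) i
  have hiE : i ∈ E := hGE hiG
  have hiH0 : i ∉ H0 := fun h => hH0E i h hiE
  have hiH1 : i ∉ H1 := fun h => hH1E i h hiE
  have hiH01 : i ∉ H01 := fun h => hH01E i h hiE
  simp only [ind, hiG, hiH0, hiH1, hiH01, if_true, if_false, Finset.notMem_empty,
    if_pos, if_neg] at I1 I2 I3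
  -- I3: 1 + 0 = ind F1 i; I1 : ind F01 i + 0 = ind F0 i + ind F1 i; I2: ind F0 i + 0 = ind F01 i + 0
  by_cases h1 : i ∈ F1 <;> by_cases h0 : i ∈ F0 <;> by_cases h01 : i ∈ F01 <;>
    simp [h1, h0, h01] at I1 I2 I3

lemma FSfrom_comp_eq (β : ℕ → ℤ) (e : ℕ ≃ ℕ) (m : ℕ) :
    FSfrom (fun n => β (e n)) m = FSE β ((range m).image e) := by
  ext t; constructor
  · rintro ⟨F, hFne, hFm, hsum⟩
    refine ⟨F.image e, hFne.image e, ?_, ?_⟩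
    · intro u hu hmem
      obtain ⟨v, hv, rfl⟩ := Finset.mem_image.1 hu
      obtain ⟨w, hw, hew⟩ := Finset.mem_image.1 hmem
      have hwv : w = v := e.injective hew
      have h1 : m ≤ v := hFm v hv
      have h2 : w < m := Finset.mem_range.1 hw
      omega
    · rw [Finset.sum_image (fun a _ b _ h => e.injective h)]; exact hsum
  · rintro ⟨F, hFne, hFE, hsum⟩
    refine ⟨F.image e.symm, hFne.image _, ?_, ?_⟩
    · intro u hu
      obtain ⟨v, hv, rfl⟩ := Finset.mem_image.1 hu
      by_contra hlt
      exact hFE v hv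
        (Finset.mem_image.2 ⟨e.symm v, Finset.mem_range.2 (by omega), by simp⟩)
    · rw [Finset.sum_image (fun a _ b _ h => e.symm.injective h)]
      simpa using hsum

lemma main_pos (k : ℕ) (hk : 4 ≤ k) (U : Ultrafilter ℤ) (hU : StronglySummable U)
    (hpos : {t : ℤ | 0 < t} ∈ U) (A : Set ℤ) (hA : A ∈ U) :
    ∃ x : ℕ → ℤ, Function.Injective x ∧ FS x ⊆ A ∧ (∀ m : ℕ, FSfrom x m ∈ U) ∧
      (∀ n : ℕ, (k:ℤ) * |∑ t ∈ Finset.range (n+1), x t| < |x (n+1)|) := by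
  set R := k + 4 with hRdef
  have hR8 : 8 ≤ R := by omega
  set D : ℕ → Set ℤ := fun r => {t : ℤ | 0 < t ∧ Nat.log 2 t.toNat % R = r} with hD
  have hcover : {t : ℤ | 0 < t} ⊆ ⋃ r ∈ {r : ℕ | r < R}, D r := by
    intro t ht
    exact Set.mem_biUnion (show Nat.log 2 t.toNat % R < R from Nat.mod_lt _ (by omega))
      ⟨ht, rfl⟩
  have hUn : (⋃ r ∈ {r : ℕ | r < R}, D r) ∈ U := Filter.mem_of_superset hpos hcover
  obtain ⟨r, hrR, hDr⟩ := (Ultrafilter.finite_biUnion_mem_iff (Set.finite_Iio R)).1 hUn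
  have hrR' : r < R := hrR
  obtain ⟨β, hβinj, hβsub, hβFS⟩ := hU (A ∩ D r) (Filter.inter_mem hA hDr)
  -- basic facts about elements of FS β
  have hmem : ∀ t ∈ FS β, t ∈ A ∧ 0 < t ∧ Nat.log 2 t.toNat % R = r := by
    intro t ht
    obtain ⟨h1, h2, h3⟩ := hβsub ht
    exact ⟨h1, h2, h3⟩
  set s : ℕ → ℕ := fun i => Nat.log 2 (β i).toNat / R with hs
  have hβi : ∀ i, 0 < β i := fun i => (hmem _ (single_mem_FS β i)).2.1
  have hlog : ∀ i, Nat.log 2 (β i).toNat = R * s i + r := by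
    intro i
    have h := (hmem _ (single_mem_FS β i)).2.2
    have h2 := Nat.div_add_mod (Nat.log 2 (β i).toNat) R
    simp only [hs]
    omega
  have hcast : ∀ i, ((β i).toNat : ℤ) = β i := fun i => Int.toNat_of_nonneg (hβi i).le
  have htoNat_pos : ∀ i, (β i).toNat ≠ 0 := by
    intro i
    have := hβi i
    omega
  have hlowN : ∀ i, 2^(R * s i + r) ≤ (β i).toNat := by
    intro i
    have := Nat.pow_log_le_self 2 (htoNat_pos i)
    rwa [hlog i] at this
  have hhighN : ∀ i, (β i).toNat < 2^(R * s i + r + 1) := by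
    intro i
    have := Nat.lt_pow_succ_log_self (by norm_num : 1 < 2) (β i).toNat
    rwa [hlog i] at this
  have hlow : ∀ i, (2:ℤ)^(R * s i + r) ≤ β i := by
    intro i
    have := hlowN i
    have h2 : ((2^(R * s i + r) : ℕ) : ℤ) ≤ ((β i).toNat : ℤ) := by exact_mod_cast this
    rwa [hcast i, Nat.cast_pow, Nat.cast_ofNat] at h2
  have hhigh : ∀ i, β i < (2:ℤ)^(R * s i + r + 1) := by
    intro i
    have := hhighN i
    have h2 : ((β i).toNat : ℤ) < ((2^(R * s i + r + 1) : ℕ) : ℤ) := by exact_mod_cast this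
    rwa [hcast i, Nat.cast_pow, Nat.cast_ofNat] at h2
  -- scales are pairwise distinct
  have hsinj : Function.Injective s := by
    intro i j hij
    by_contra hne
    have hane : β i + β j ∈ FS β := pair_mem_FS β (fun h => hne (by rw [h]))
    obtain ⟨-, hpos2, hclass⟩ := hmem _ hane
    have htn : (β i + β j).toNat = (β i).toNat + (β j).toNat := by
      have h1 := hβi i
      have h2 := hβi j
      omega
    have h1l := hlowN i
    have h2l := hlowN j
    have h1h := hhighN i
    have h2h := hhighN j
    rw [← hij] at h2l h2h
    have hlo : 2^(R * s i + r + 1) ≤ (β i + β j).toNat := by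
      rw [htn]
      have : 2^(R * s i + r) + 2^(R * s i + r) = 2^(R * s i + r + 1) := by ring
      omega
    have hhi : (β i + β j).toNat < 2^(R * s i + r + 1 + 1) := by
      rw [htn]
      have : 2^(R * s i + r + 1) + 2^(R * s i + r + 1) = 2^(R * s i + r + 1 + 1) := by ring
      omega
    have hlogsum : Nat.log 2 (β i + β j).toNat = R * s i + r + 1 :=
      Nat.log_eq_of_pow_le_of_lt_pow hlo hhi
    rw [hlogsum] at hclass
    have hmod : (R * s i + r + 1) % R = (r + 1) % R := by
      have he2 : R * s i + r + 1 = (r + 1) + R * s i := by ring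
      rw [he2, Nat.add_mul_mod_self_left]
    rw [hmod] at hclass
    rcases Nat.lt_or_ge (r+1) R with h | h
    · rw [Nat.mod_eq_of_lt h] at hclass; omega
    · have hrR1 : r + 1 = R := by omega
      rw [hrR1, Nat.mod_self] at hclass
      omega
  -- sorting permutation
  have hinfp : {n | n ∈ Set.range s}.Infinite := Set.infinite_range_of_injective hsinj
  set p : ℕ → Prop := fun n => n ∈ Set.range s with hp
  have hnth_mem : ∀ n, Nat.nth p n ∈ Set.range s := fun n => Nat.nth_mem_of_infinite hinfp n
  set f : ℕ → ℕ := fun n => (hnth_mem n).choose with hf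
  have hsf : ∀ n, s (f n) = Nat.nth p n := fun n => (hnth_mem n).choose_spec
  have hmono : StrictMono (fun n => s (f n)) := by
    have h := Nat.nth_strictMono hinfp
    intro a b hab
    show s (f a) < s (f b)
    rw [hsf a, hsf b]
    exact h hab
  have hfinj : Function.Injective f := by
    intro a b hab
    exact hmono.injective (by rw [hab])
  have hfsurj : Function.Surjective f := by
    intro i
    have : s i ∈ Set.range (Nat.nth p) := by
      rw [Nat.range_nth_of_infinite hinfp]
      exact ⟨i, rfl⟩
    obtain ⟨n, hn⟩ := this
    exact ⟨n, hsinj ((hsf n).trans hn)⟩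
  set e : ℕ ≃ ℕ := Equiv.ofBijective f ⟨hfinj, hfsurj⟩ with he
  set x : ℕ → ℤ := fun n => β (e n) with hx
  have hex : ∀ n, e n = f n := fun n => rfl
  refine ⟨x, ?_, ?_, ?_, ?_⟩
  · exact hβinj.comp e.injective
  · rintro t ⟨F, hFne, hsum⟩
    have : t ∈ FS β := by
      refine ⟨F.image e, hFne.image e, ?_⟩
      rw [Finset.sum_image (fun a _ b _ h => e.injective h)]
      exact hsum
    exact (hmem t this).1
  · intro m
    have heq := FSfrom_comp_eq β e m
    rw [show FSfrom x m = FSfrom (fun n => β (e n)) m from rfl, heq]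
    exact tails_lemma U hU β hβFS
      (cu_of_scales R r β s (by omega) hsinj hlow hhigh) _
  · intro n
    have hxpos : ∀ t, 0 < x t := fun t => hβi (e t)
    have hsumpos : 0 ≤ ∑ t ∈ Finset.range (n+1), x t :=
      Finset.sum_nonneg (fun t _ => (hxpos t).le)
    rw [abs_of_nonneg hsumpos]
    have hsumeq : ∑ t ∈ Finset.range (n+1), x t = ∑ i ∈ (Finset.range (n+1)).image e, β i := by
      rw [Finset.sum_image (fun a _ b _ h => e.injective h)]
    have hsb : ∑ i ∈ (Finset.range (n+1)).image e, β i < 2^(R * s (e n) + r + 2) := by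
      have h := sum_beta_lt R r β s (by omega) hsinj hhigh (s (e n) + 1)
        ((Finset.range (n+1)).image e) ?_
      · have he1 : (s (e n) + 1) - 1 = s (e n) := by omega
        rw [he1] at h
        exact h
      · intro i hi
        obtain ⟨t, ht, rfl⟩ := Finset.mem_image.1 hi
        have ht' : t ≤ n := by
          have := Finset.mem_range.1 ht
          omega
        have : s (e t) ≤ s (e n) := by
          rcases eq_or_lt_of_le ht' with rfl | hlt
          · exact le_refl _
          · exact (hmono hlt).le
        omega
    have hklt : (k:ℤ) ≤ 2^k := by
      have := Nat.lt_two_pow_self (n := k)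
      exact_mod_cast this.le
    have hkpos : (0:ℤ) < k := by exact_mod_cast (by omega : 0 < k)
    have step1 : (k:ℤ) * ∑ t ∈ Finset.range (n+1), x t < (k:ℤ) * 2^(R * s (e n) + r + 2) := by
      rw [hsumeq]
      exact mul_lt_mul_of_pos_left hsb hkpos
    have step2 : (k:ℤ) * 2^(R * s (e n) + r + 2) ≤ 2^k * 2^(R * s (e n) + r + 2) :=
      mul_le_mul_of_nonneg_right hklt (by positivity)
    have step3 : (2:ℤ)^k * 2^(R * s (e n) + r + 2) = 2^(k + (R * s (e n) + r + 2)) := by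
      rw [← pow_add]
    have hscale : s (e n) + 1 ≤ s (e (n+1)) := by
      have h2 : s (f n) < s (f (n+1)) := hmono (show n < n + 1 by omega)
      exact Nat.succ_le_of_lt h2
    have step4 : k + (R * s (e n) + r + 2) ≤ R * s (e (n+1)) + r := by
      have h1 : R * (s (e n) + 1) ≤ R * s (e (n+1)) := Nat.mul_le_mul_left R hscale
      have h2 : R * (s (e n) + 1) = R * s (e n) + R := by ring
      omega
    have step5 : (2:ℤ)^(k + (R * s (e n) + r + 2)) ≤ 2^(R * s (e (n+1)) + r) :=
      pow_le_pow_right₀ (by norm_num) step4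
    have step6 : (2:ℤ)^(R * s (e (n+1)) + r) ≤ β (e (n+1)) := hlow (e (n+1))
    have hxabs : |x (n+1)| = β (e (n+1)) := abs_of_pos (hβi (e (n+1)))
    rw [hxabs]
    calc (k:ℤ) * ∑ t ∈ Finset.range (n+1), x t
        < (k:ℤ) * 2^(R * s (e n) + r + 2) := step1
      _ ≤ 2^k * 2^(R * s (e n) + r + 2) := step2
      _ = 2^(k + (R * s (e n) + r + 2)) := step3
      _ ≤ 2^(R * s (e (n+1)) + r) := step5
      _ ≤ β (e (n+1)) := step6

/-- A strongly summable ultrafilter contains an FS-set of a sequence with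
arbitrarily prescribed lacunary growth. -/
theorem ss_ultrafilter_main_lemma (k : ℕ) (hk : 4 ≤ k) (U : Ultrafilter ℤ)
    (hU : StronglySummable U) (A : Set ℤ) (hA : A ∈ U) :
    ∃ x : ℕ → ℤ, Function.Injective x ∧
      FS x ⊆ A ∧
      (∀ m : ℕ, FSfrom x m ∈ U) ∧
      (∀ n : ℕ, (k : ℤ) * |∑ t ∈ Finset.range (n + 1), x t| < |x (n + 1)|) := by
  by_cases hpos : {t : ℤ | 0 < t} ∈ U
  · exact main_pos k hk U hU hpos A hA
  · have h0 : ({0} : Set ℤ) ∉ U := not_singleton_mem U hU 0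
    have hneg : {t : ℤ | t < 0} ∈ U := by
      have hcompl : {t : ℤ | 0 < t}ᶜ ∈ U := (Ultrafilter.compl_mem_iff_notMem).2 hpos
      have hsplit : {t : ℤ | 0 < t}ᶜ = {t : ℤ | t < 0} ∪ {0} := by
        ext t
        simp only [Set.mem_compl_iff, Set.mem_setOf_eq, Set.mem_union, Set.mem_singleton_iff]
        omega
      rw [hsplit] at hcompl
      rcases (Ultrafilter.union_mem_iff).1 hcompl with h | h
      · exact h
      · exact absurd h h0
    set U' : Ultrafilter ℤ := U.map (fun t => -t) with hU'def
    have hmemU' : ∀ B : Set ℤ, B ∈ U' ↔ {t : ℤ | -t ∈ B} ∈ U := by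
      intro B
      rw [hU'def, Ultrafilter.mem_map]
      rfl
    have hUS' : StronglySummable U' := by
      intro B hB
      rw [hmemU'] at hB
      obtain ⟨x, hinj, hsub, hFS⟩ := hU _ hB
      refine ⟨fun n => - x n, fun a b hab => hinj (neg_injective hab), ?_, ?_⟩
      · rintro t ⟨F, hFne, hsum⟩
        have hmm : (∑ u ∈ F, x u) ∈ {t : ℤ | -t ∈ B} := hsub ⟨F, hFne, rfl⟩
        have ht : t = - ∑ u ∈ F, x u := by
          rw [← hsum]
          simp
        rw [ht]
        exact hmm
      · rw [hmemU']
        refine Filter.mem_of_superset hFS ?_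
        rintro t ⟨F, hFne, hsum⟩
        show -t ∈ FS (fun n => -x n)
        exact ⟨F, hFne, by rw [← hsum]; simp⟩
    have hpos' : {t : ℤ | 0 < t} ∈ U' := by
      rw [hmemU']
      have heq : {t : ℤ | -t ∈ {u : ℤ | 0 < u}} = {t : ℤ | t < 0} := by
        ext t
        simp only [Set.mem_setOf_eq]
        omega
      rw [heq]
      exact hneg
    have hA' : {t : ℤ | -t ∈ A} ∈ U' := by
      rw [hmemU']
      have heq : {t : ℤ | -t ∈ {u : ℤ | -u ∈ A}} = A := by
        ext t
        simp
      rw [heq]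
      exact hA
    obtain ⟨x', hinj', hsub', htail', hgrow'⟩ := main_pos k hk U' hUS' hpos' {t : ℤ | -t ∈ A} hA'
    refine ⟨fun n => - x' n, fun a b hab => hinj' (neg_injective hab), ?_, ?_, ?_⟩
    · rintro t ⟨F, hFne, hsum⟩
      have hmm : (∑ u ∈ F, x' u) ∈ {u : ℤ | -u ∈ A} := hsub' ⟨F, hFne, rfl⟩
      have ht : t = - ∑ u ∈ F, x' u := by
        rw [← hsum]; simp
      rw [ht]
      exact hmm
    · intro m
      have := (hmemU' (FSfrom x' m)).1 (htail' m)
      refine Filter.mem_of_superset this ?_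
      rintro t ht
      obtain ⟨F, hFne, hFm, hsum⟩ := ht
      exact ⟨F, hFne, hFm, by simp [hsum]⟩
    · intro n
      have h := hgrow' n
      have e1 : ∑ t ∈ Finset.range (n+1), (fun n => - x' n) t = - ∑ t ∈ Finset.range (n+1), x' t := by
        simp
      rw [e1, abs_neg]
      show (k:ℤ) * |∑ t ∈ Finset.range (n + 1), x' t| < |-(x' (n+1))|
      rw [abs_neg]
      exact h
end

section
/- Let σ = (a₁, …, a_n) be a reduced string of integers, let (x_t) be a sequence of integers, and let U be an additively idempotent ultrafilter on ℤ such that FS((x_t)_{t≥m}) ∈ U for all m. Then the Milliken–Taylor set MT(σ, (x_t)) = { ∑_{i=1}^{n} a_i (∑_{j∈F_i} x_j) : F₁ < F₂ < ⋯ < F_n nonempty finite subsets of ℕ } belongs to the ultrafilter a₁U + ⋯ + a_nU. -/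
/-- The pushforward of `U` along `x ↦ a * x`. -/
def usmul (a : ℤ) (U : Ultrafilter ℤ) : Ultrafilter ℤ :=
  U.map fun x => a * x

/-- The linear combination `a₁U + ⋯ + aₙU` associated with a nonempty string
(junk value `U` on the empty string). -/
def combo (U : Ultrafilter ℤ) : List ℤ → Ultrafilter ℤ
  | [] => U
  | [a] => usmul a U
  | a :: b :: l => uadd (usmul a U) (combo U (b :: l))

/-- The Milliken–Taylor set of a string `σ` and a sequence `x`. -/
def MTset (σ : List ℤ) (x : ℕ → ℤ) : Set ℤ :=
  {s | ∃ F : Fin σ.length → Finset ℕ,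
    (∀ i, (F i).Nonempty) ∧
    (∀ i j : Fin σ.length, i < j → ∀ p ∈ F i, ∀ q ∈ F j, p < q) ∧
    ∑ i : Fin σ.length, σ.get i * ∑ t ∈ F i, x t = s}

/-- Tail Milliken–Taylor sets, defined recursively on the string. -/
def MTfrom (x : ℕ → ℤ) : List ℤ → ℕ → Set ℤ
  | [], _ => {0}
  | a :: l, m => {s | ∃ F : Finset ℕ, F.Nonempty ∧ (∀ t ∈ F, m ≤ t) ∧
      ∃ w ∈ MTfrom x l (F.sup id + 1), s = a * ∑ t ∈ F, x t + w}

lemma mem_uadd {U V : Ultrafilter ℤ} {S : Set ℤ}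
    (h : {z | {w | z + w ∈ S} ∈ V} ∈ U) : S ∈ uadd U V := by
  show S ∈ Filter.bind _ _
  rw [Filter.mem_bind]
  exact ⟨{z | {w | z + w ∈ S} ∈ V}, h, fun z hz => hz⟩

lemma mem_usmul {U : Ultrafilter ℤ} {a : ℤ} {S : Set ℤ}
    (h : (fun y => a * y) ⁻¹' S ∈ U) : S ∈ usmul a U :=
  Ultrafilter.mem_map.mpr h

/-- Each tail MT set is in the corresponding combo. -/
lemma MTfrom_mem_combo (x : ℕ → ℤ) (U : Ultrafilter ℤ)
    (hFS : ∀ m : ℕ, FSfrom x m ∈ U) :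
    ∀ σ : List ℤ, σ ≠ [] → ∀ m : ℕ, MTfrom x σ m ∈ combo U σ
  | [], h, _ => absurd rfl h
  | [a], _, m => by
      apply mem_usmul
      apply Filter.mem_of_superset (hFS m)
      rintro y ⟨F, hne, hge, rfl⟩
      exact ⟨F, hne, hge, 0, rfl, by simp⟩
  | a :: b :: l, _, m => by
      have ih := MTfrom_mem_combo x U hFS (b :: l) (by simp)
      apply mem_uadd
      apply mem_usmul
      apply Filter.mem_of_superset (hFS m)
      rintro y ⟨F, hne, hge, rfl⟩
      simp only [Set.mem_preimage, Set.mem_setOf_eq]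
      apply Filter.mem_of_superset (ih (F.sup id + 1))
      intro w hw
      exact ⟨F, hne, hge, w, hw, rfl⟩

/-- Elements of tail MT sets lie in the MT set, with a witness whose supports
are all at least `m`. -/
lemma MTfrom_subset (x : ℕ → ℤ) :
    ∀ (σ : List ℤ) (m : ℕ) (s : ℤ), s ∈ MTfrom x σ m →
    ∃ F : Fin σ.length → Finset ℕ,
      (∀ i, (F i).Nonempty) ∧
      (∀ i j : Fin σ.length, i < j → ∀ p ∈ F i, ∀ q ∈ F j, p < q) ∧
      (∀ i, ∀ t ∈ F i, m ≤ t) ∧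
      ∑ i : Fin σ.length, σ.get i * ∑ t ∈ F i, x t = s
  | [], m, s, hs => by
      refine ⟨Fin.elim0, fun i => i.elim0, fun i => i.elim0, fun i => i.elim0, ?_⟩
      simpa using hs.symm
  | a :: l, m, s, hs => by
      obtain ⟨F₀, hne₀, hge₀, w, hw, rfl⟩ := hs
      obtain ⟨G, hGne, hGord, hGge, hGsum⟩ := MTfrom_subset x l (F₀.sup id + 1) w hw
      refine ⟨Fin.cons F₀ G, ?_, ?_, ?_, ?_⟩
      · intro i
        refine Fin.cases ?_ ?_ i
        · exact hne₀
        · exact hGne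
      · intro i j hij p hp q hq
        refine Fin.cases ?_ ?_ j hij hp hq
        · intro h; exact absurd h (Nat.not_lt_zero _)
        · intro j'
          refine Fin.cases ?_ ?_ i
          · intro _ hp hq
            have h1 : p ≤ F₀.sup id := Finset.le_sup (f := id) hp
            have h2 : F₀.sup id + 1 ≤ q := hGge j' q hq
            omega
          · intro i' hij hp hq
            exact hGord i' j' (by simpa using hij) p hp q hq
      · intro i
        refine Fin.cases ?_ ?_ i
        · exact hge₀
        · intro i' t ht
          have h2 : F₀.sup id + 1 ≤ t := hGge i' t ht
          obtain ⟨u, hu⟩ := hne₀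
          have := hge₀ u hu
          have := Finset.le_sup (f := id) hu
          simp only [id] at this
          omega
      · show (∑ i : Fin (l.length + 1),
            (a :: l).get i * ∑ t ∈ (Fin.cons F₀ G : Fin (l.length + 1) → Finset ℕ) i, x t) =
            a * ∑ t ∈ F₀, x t + w
        rw [Fin.sum_univ_succ]
        have hg : ∀ i : Fin l.length, (a :: l).get i.succ = l.get i := fun i => rfl
        simp only [Fin.cons_zero, Fin.cons_succ, hg, hGsum]
        rfl

/-- A Milliken–Taylor set belongs to the corresponding linear combination of an
idempotent ultrafilter containing all tail FS-sets. -/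
theorem MT_mem_combo (σ : List ℤ) (hσne : σ ≠ [])
    (hred : σ.Chain' (· ≠ ·) ∧ ∀ a ∈ σ, a ≠ 0)
    (x : ℕ → ℤ) (U : Ultrafilter ℤ) (hidem : uadd U U = U)
    (hFS : ∀ m : ℕ, FSfrom x m ∈ U) :
    MTset σ x ∈ combo U σ := by
  apply Filter.mem_of_superset (MTfrom_mem_combo x U hFS σ hσne 0)
  intro s hs
  obtain ⟨F, h1, h2, _, h4⟩ := MTfrom_subset x σ 0 s hs
  exact ⟨F, h1, h2, h4⟩
end

section
/- Let c₁, …, c_m be nonzero integers. The equation c₁x₁ + ⋯ + c_m x_m = 0 has a solution by nonzero 0-1 column vectors — i.e., there exist k ≥ 1 and vectors σ₁, …, σ_m ∈ {0,1}^k, each with at least one entry equal to 1, such that ∑_{j=1}^{m} c_j σ_j = 0 in ℤ^k — if and only if for every j ∈ {1,…,m} there exists a nonempty subset H_j ⊆ {1,…,m} \ {j} with c_j + ∑_{l∈H_j} c_l = 0. -/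
/-- A linear homogeneous equation has a solution by nonzero 0-1 column vectors
iff each coefficient can be cancelled by a nonempty subset of the others. -/
theorem zero_one_solution_iff (m : ℕ) (c : Fin m → ℤ) (hc : ∀ i, c i ≠ 0) :
    (∃ (k : ℕ) (_ : 1 ≤ k) (σ : Fin m → Fin k → ℤ),
      (∀ j i, σ j i = 0 ∨ σ j i = 1) ∧
      (∀ j, ∃ i, σ j i = 1) ∧
      (∀ i, ∑ j, c j * σ j i = 0)) ↔
    (∀ j, ∃ H : Finset (Fin m), H.Nonempty ∧ j ∉ H ∧
      c j + ∑ l ∈ H, c l = 0) := by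
  constructor
  · rintro ⟨k, hk, σ, h01, hnz, hsum⟩ j
    obtain ⟨i, hi⟩ := hnz j
    set H : Finset (Fin m) := (Finset.univ.erase j).filter (fun l => σ l i = 1) with hH
    have hsplit : c j * σ j i + ∑ l ∈ Finset.univ.erase j, c l * σ l i = 0 := by
      exact (Finset.add_sum_erase Finset.univ (fun l => c l * σ l i)
        (Finset.mem_univ j)).trans (hsum i)
    have hfil : ∑ l ∈ H, c l * σ l i = ∑ l ∈ Finset.univ.erase j, c l * σ l i := by
      apply Finset.sum_filter_of_ne
      intro x _ hx
      rcases h01 x i with h | h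
      · exact absurd (by rw [h, mul_zero]) hx
      · exact h
    have hone : ∑ l ∈ H, c l * σ l i = ∑ l ∈ H, c l := by
      apply Finset.sum_congr rfl
      intro x hx
      rw [(Finset.mem_filter.mp hx).2, mul_one]
    have hkey : c j + ∑ l ∈ H, c l = 0 := by
      rw [← hone, hfil, ← hsplit, hi, mul_one]
    refine ⟨H, ?_, fun hj => (Finset.mem_erase.mp (Finset.mem_filter.mp hj).1).1 rfl, hkey⟩
    rcases Finset.eq_empty_or_nonempty H with he | hne
    · rw [he, Finset.sum_empty, add_zero] at hkey
      exact absurd hkey (hc j)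
    · exact hne
  · intro h
    rcases Nat.eq_zero_or_pos m with rfl | hm
    · exact ⟨1, le_refl 1, fun j => j.elim0, fun j => j.elim0, fun j => j.elim0,
        fun i => by simp⟩
    · choose H hne hnotmem hsum using h
      refine ⟨m, hm, fun j i => if j ∈ insert i (H i) then 1 else 0, ?_, ?_, ?_⟩
      · intro j i
        by_cases hj : j ∈ insert i (H i) <;> simp [hj]
      · intro j
        exact ⟨j, by simp⟩
      · intro i
        have : ∀ j, c j * (if j ∈ insert i (H i) then (1:ℤ) else 0)
            = if j ∈ insert i (H i) then c j else 0 := by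
          intro j; by_cases hj : j ∈ insert i (H i) <;> simp [hj]
        simp only [this]
        rw [Finset.sum_ite_mem, Finset.univ_inter,
          Finset.sum_insert (hnotmem i)]
        exact hsum i
end

section
/- Let U be a strongly summable ultrafilter on ℤ. Then either the set of positive integers belongs to U, or the set of negative integers belongs to −U and −U restricted to ℕ is a strongly summable ultrafilter on ℕ; in other words, either U or −U induces a strongly summable ultrafilter on ℕ. -/
/-- The set of finite sums of a sequence of integers. -/
def FSZ (x : ℕ → ℤ) : Set ℤ :=
  {s | ∃ F : Finset ℕ, F.Nonempty ∧ ∑ t ∈ F, x t = s}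

/-- The set of finite sums of a sequence of naturals. -/
def FSN (x : ℕ → ℕ) : Set ℕ :=
  {s | ∃ F : Finset ℕ, F.Nonempty ∧ ∑ t ∈ F, x t = s}

/-- Strong summability on ℤ. -/
def StronglySummableZ (U : Ultrafilter ℤ) : Prop :=
  ∀ A : Set ℤ, A ∈ U → ∃ x : ℕ → ℤ, Function.Injective x ∧
    FSZ x ⊆ A ∧ FSZ x ∈ U

/-- Strong summability on ℕ. -/
def StronglySummableN (V : Ultrafilter ℕ) : Prop :=
  ∀ A : Set ℕ, A ∈ V → ∃ x : ℕ → ℕ, Function.Injective x ∧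
    FSN x ⊆ A ∧ FSN x ∈ V

/-- The image of `U` under negation. -/
def uneg (U : Ultrafilter ℤ) : Ultrafilter ℤ :=
  U.map fun n => -n

lemma map_eq_map (V : Ultrafilter ℕ) :
    (V.map fun n => (n : ℤ)) = Ultrafilter.map (fun n : ℕ => (n : ℤ)) V := by
  apply Ultrafilter.coe_injective
  show ((↑V : Filter ℕ).bind fun x => pure (↑x : ℤ)) = Filter.map (fun n : ℕ => (n : ℤ)) ↑V
  ext s
  simp only [Filter.mem_bind, Filter.mem_map, Filter.mem_pure]
  constructor
  · rintro ⟨t, ht, hsub⟩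
    exact Filter.mem_of_superset ht hsub
  · intro h
    exact ⟨_, h, fun x hx => hx⟩

lemma single_mem_FSZ (x : ℕ → ℤ) (n : ℕ) : x n ∈ FSZ x :=
  ⟨{n}, Finset.singleton_nonempty n, by simp⟩

/-- Key lemma: if the positives belong to a strongly summable ultrafilter on ℤ,
it is induced from a strongly summable ultrafilter on ℕ. -/
lemma key (W : Ultrafilter ℤ) (hW : StronglySummableZ W)
    (hpos : {n : ℤ | 0 < n} ∈ W) :
    ∃ V : Ultrafilter ℕ, StronglySummableN V ∧ V.map (fun n => (n : ℤ)) = W := by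
  have hinj : Function.Injective (fun n : ℕ => (n : ℤ)) := Nat.cast_injective
  have hlarge : Set.range (fun n : ℕ => (n : ℤ)) ∈ W := by
    refine W.toFilter.mem_of_superset hpos ?_
    rintro n (hn : 0 < n)
    exact ⟨n.toNat, Int.toNat_of_nonneg hn.le⟩
  refine ⟨W.comap hinj hlarge, ?_, ?_⟩
  · intro A hA
    rw [Ultrafilter.mem_comap] at hA
    have hB : ((fun n : ℕ => (n : ℤ)) '' A) ∩ {n : ℤ | 0 < n} ∈ W :=
      Filter.inter_mem hA hpos
    obtain ⟨x, hx_inj, hx_sub, hx_mem⟩ := hW _ hB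
    have hxpos : ∀ n, 0 < x n := fun n => (hx_sub (single_mem_FSZ x n)).2
    set y : ℕ → ℕ := fun n => (x n).toNat with hy
    have hcast : ∀ n, ((y n : ℤ)) = x n := fun n => Int.toNat_of_nonneg (hxpos n).le
    have hsum : ∀ F : Finset ℕ, ((∑ t ∈ F, y t : ℕ) : ℤ) = ∑ t ∈ F, x t := by
      intro F; push_cast; exact Finset.sum_congr rfl fun t _ => hcast t
    have hFS : ∀ s ∈ FSN y, ((s : ℤ)) ∈ FSZ x := by
      rintro s ⟨F, hF, rfl⟩
      exact ⟨F, hF, (hsum F).symm⟩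
    refine ⟨y, ?_, ?_, ?_⟩
    · intro a b h
      apply hx_inj
      rw [← hcast a, ← hcast b, h]
    · intro s hs
      have := hx_sub (hFS s hs)
      obtain ⟨m, hm, hms⟩ := this.1
      have : m = s := Nat.cast_injective hms
      rwa [this] at hm
    · rw [Ultrafilter.mem_comap]
      refine W.toFilter.mem_of_superset hx_mem ?_
      rintro z ⟨F, hF, rfl⟩
      exact ⟨∑ t ∈ F, y t, ⟨F, hF, rfl⟩, hsum F⟩
  · rw [map_eq_map]
    ext s
    rw [Ultrafilter.mem_map, Ultrafilter.mem_comap,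
      Set.image_preimage_eq_inter_range]
    constructor
    · intro h
      exact W.toFilter.mem_of_superset h Set.inter_subset_left
    · intro h
      exact Filter.inter_mem h hlarge

lemma uneg_strong (U : Ultrafilter ℤ) (hU : StronglySummableZ U) :
    StronglySummableZ (uneg U) := by
  intro A hA
  have hA' : (fun n : ℤ => -n) ⁻¹' A ∈ U := hA
  obtain ⟨x, hx_inj, hx_sub, hx_mem⟩ := hU _ hA'
  refine ⟨fun n => -x n, fun a b h => hx_inj (by simpa using neg_injective h), ?_, ?_⟩
  · rintro s ⟨F, hF, rfl⟩
    have : ∑ t ∈ F, (-x t) = -(∑ t ∈ F, x t) := by simp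
    rw [this]
    exact hx_sub ⟨F, hF, rfl⟩
  · show (fun n : ℤ => -n) ⁻¹' (FSZ fun n => -x n) ∈ U
    refine U.toFilter.mem_of_superset hx_mem ?_
    rintro z ⟨F, hF, rfl⟩
    exact ⟨F, hF, by simp⟩

/-- A strongly summable ultrafilter on ℤ induces (either directly or after
negation) a strongly summable ultrafilter on ℕ. -/
theorem stronglySummable_int_induces_nat (U : Ultrafilter ℤ)
    (hU : StronglySummableZ U) :
    (∃ V : Ultrafilter ℕ, StronglySummableN V ∧
      V.map (fun n => (n : ℤ)) = U) ∨
    (∃ V : Ultrafilter ℕ, StronglySummableN V ∧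
      V.map (fun n => (n : ℤ)) = uneg U) := by
  have h0 : ({0} : Set ℤ) ∉ U := by
    intro h0
    obtain ⟨x, hx_inj, hx_sub, _⟩ := hU _ h0
    have h1 : x 0 = 0 := hx_sub (single_mem_FSZ x 0)
    have h2 : x 1 = 0 := hx_sub (single_mem_FSZ x 1)
    exact absurd (hx_inj (h1.trans h2.symm)) (by norm_num)
  by_cases hpos : {n : ℤ | 0 < n} ∈ U
  · exact Or.inl (key U hU hpos)
  · right
    have hneg : {n : ℤ | n < 0} ∈ U := by
      have hc : {n : ℤ | 0 < n}ᶜ ∈ U := (Ultrafilter.compl_mem_iff_notMem).mpr hpos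
      have hc0 : ({0} : Set ℤ)ᶜ ∈ U := (Ultrafilter.compl_mem_iff_notMem).mpr h0
      refine U.toFilter.mem_of_superset (Filter.inter_mem hc hc0) ?_
      rintro n ⟨h1, h2⟩
      simp only [Set.mem_compl_iff, Set.mem_setOf_eq, not_lt] at h1
      simp only [Set.mem_compl_iff, Set.mem_singleton_iff] at h2
      exact lt_of_le_of_ne h1 h2
    have hpos' : {n : ℤ | 0 < n} ∈ uneg U := by
      show (fun n : ℤ => -n) ⁻¹' {n : ℤ | 0 < n} ∈ U
      refine U.toFilter.mem_of_superset hneg ?_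
      intro n hn
      simpa using hn
    exact key (uneg U) (uneg_strong U hU) hpos'
end
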